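/- arXiv:1911.06691 — 4 statements merged into one kernel-verified Lean document; each statement's English description precedes it below -/
import Mathlib

section
/- Let n > r ≥ 1, let A ∈ Mₙ(ℝ) be written in block form A = [[A₁₁, A₁₂],[A₂₁, A₂₂]] with A₁₁ ∈ M_r(ℝ), and let B = [[0,0],[0,B₂₂]] ∈ Mₙ(ℝ) with B₂₂ ∈ M_{n−r}(ℝ). Assume B₂₂ + B₂₂ᵗ is positive definite and every complex eigenvalue of A₁₁ has positive real part (so A₁₁ is invertible). Consider the steady-state boundary-value problem: U : [0,1] → ℝⁿ twice continuously differentiable with A U′ = B U″ on [0,1], U(0) = U₀, and U_{II}(1) = U_{1,II}, where U = (U_I, U_{II}) ∈ ℝʳ × ℝ^{n−r}. Then this problem has a unique solution for every choice of U₀ ∈ ℝⁿ and U_{1,II} ∈ ℝ^{n−r} if and only if no complex eigenvalue of the matrix B₂₂⁻¹(A₂₂ − A₂₁ A₁₁⁻¹ A₁₂) equals 2πik for some nonzero integer k. -/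
open Matrix NormedSpace

noncomputable section
namespace Stmt14X

/-- scalar function F(μ) = Σ μ^n/Nat.factorial (n+1) -/
def F (μ : ℂ) : ℂ := ∑' n : ℕ, ((Nat.factorial (n+1) : ℂ))⁻¹ * μ ^ n

lemma summable_F (μ : ℂ) : Summable fun n : ℕ => ((Nat.factorial (n+1) : ℂ))⁻¹ * μ ^ n := by
  refine Summable.of_norm_bounded (Real.summable_pow_div_factorial ‖μ‖) fun n => ?_
  rw [norm_mul, norm_pow, norm_inv, Complex.norm_natCast, div_eq_inv_mul]
  have h1 : ((Nat.factorial n : ℝ))⁻¹ ≥ ((Nat.factorial (n+1) : ℝ))⁻¹ := by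
    apply inv_anti₀ (by positivity)
    exact_mod_cast Nat.factorial_le (Nat.le_succ n)
  exact mul_le_mul_of_nonneg_right h1 (by positivity)

lemma mul_F (μ : ℂ) : μ * F μ = Complex.exp μ - 1 := by
  have h1 : Complex.exp μ = ∑' n : ℕ, (((Nat.factorial n) : ℂ))⁻¹ * μ ^ n := by
    rw [Complex.exp_eq_exp_ℂ, exp_eq_tsum (𝕂 := ℂ)]
    simp [smul_eq_mul]
  have hsum : Summable fun n : ℕ => (((Nat.factorial n) : ℂ))⁻¹ * μ ^ n := by
    refine Summable.of_norm_bounded (Real.summable_pow_div_factorial ‖μ‖) fun n => ?_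
    rw [norm_mul, norm_pow, norm_inv, div_eq_inv_mul]
    simp
  have h2 := Summable.tsum_eq_zero_add hsum
  simp only [pow_zero, Nat.factorial_zero, Nat.cast_one, inv_one, mul_one] at h2
  rw [h1, h2, F, ← tsum_mul_left]
  have he : ∀ n : ℕ, μ * ((((Nat.factorial (n+1)) : ℂ))⁻¹ * μ ^ n)
      = (((Nat.factorial (n+1)) : ℂ))⁻¹ * μ ^ (n+1) := fun n => by ring
  rw [tsum_congr he]
  ring

lemma F_zero : F 0 = 1 := by
  rw [F]
  rw [tsum_eq_single 0 (fun n hn => by simp [zero_pow hn])]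
  simp

lemma F_ne_zero_iff (μ : ℂ) :
    F μ ≠ 0 ↔ ∀ k : ℤ, k ≠ 0 → μ ≠ 2 * Real.pi * Complex.I * k := by
  rcases eq_or_ne μ 0 with rfl | hμ
  · simp only [F_zero, ne_eq, one_ne_zero, not_false_iff, true_iff]
    intro k hk h
    have : (2 * Real.pi * Complex.I * k) ≠ 0 := by
      simp [Real.pi_ne_zero, Complex.I_ne_zero, Complex.ext_iff, hk]
    exact this h.symm
  · constructor
    · intro hF k hk hkμ
      apply hF
      have : μ * F μ = 0 := by
        rw [mul_F, sub_eq_zero, hkμ]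
        rw [Complex.exp_eq_one_iff]
        exact ⟨k, by push_cast; ring⟩
      rcases mul_eq_zero.1 this with h | h
      · exact absurd h hμ
      · exact h
    · intro h hF
      have : Complex.exp μ = 1 := by
        have := mul_F μ
        rw [hF, mul_zero] at this
        linear_combination -this
      rw [Complex.exp_eq_one_iff] at this
      obtain ⟨n, hn⟩ := this
      have hn0 : n ≠ 0 := by rintro rfl; simp at hn; exact hμ hn
      exact h n hn0 (by rw [hn]; push_cast; ring)


attribute [local instance] Matrix.linftyOpNormedAddCommGroup Matrix.linftyOpNormedRing
  Matrix.linftyOpNormedAlgebra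

variable {d : ℕ}

/-- the matrix power series `S M = ∑ Mⁿ/(n+1)!` -/
def S (𝕂 : Type*) [RCLike 𝕂] (M : Matrix (Fin d) (Fin d) 𝕂) : Matrix (Fin d) (Fin d) 𝕂 :=
  ∑' n : ℕ, ((Nat.factorial (n+1) : 𝕂))⁻¹ • M ^ n

variable {𝕂 : Type*} [RCLike 𝕂] [NeZero d]

lemma norm_pow_le_mat (M : Matrix (Fin d) (Fin d) 𝕂) (n : ℕ) : ‖M ^ n‖ ≤ ‖M‖ ^ n := by
  rcases Nat.eq_zero_or_pos n with rfl | hn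
  · simp [norm_one]
  · exact norm_pow_le' M hn

lemma norm_term_le (M : Matrix (Fin d) (Fin d) 𝕂) (n : ℕ) :
    ‖((Nat.factorial (n+1) : 𝕂))⁻¹ • M ^ n‖ ≤ ‖M‖ ^ n / (Nat.factorial n) := by
  rw [norm_smul, norm_inv, RCLike.norm_natCast, div_eq_inv_mul]
  have h1 : ((Nat.factorial n : ℝ))⁻¹ ≥ ((Nat.factorial (n+1) : ℝ))⁻¹ := by
    apply inv_anti₀ (by positivity)
    exact_mod_cast Nat.factorial_le (Nat.le_succ n)
  calc ((Nat.factorial (n+1) : ℝ))⁻¹ * ‖M ^ n‖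
      ≤ ((Nat.factorial n : ℝ))⁻¹ * ‖M‖ ^ n := by
        apply mul_le_mul h1 (norm_pow_le_mat M n) (norm_nonneg _) (by positivity)

lemma summable_S (M : Matrix (Fin d) (Fin d) 𝕂) :
    Summable fun n : ℕ => ((Nat.factorial (n+1) : 𝕂))⁻¹ • M ^ n :=
  Summable.of_norm_bounded (Real.summable_pow_div_factorial ‖M‖) (norm_term_le M)

lemma commute_S (M : Matrix (Fin d) (Fin d) 𝕂) : Commute M (S 𝕂 M) :=
  Commute.tsum_right M fun n =>
    ((Commute.refl M).pow_right n).smul_right _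

/-- `A ↦ A *ᵥ v` as a continuous linear map. -/
def mulVecCLM (v : Fin d → 𝕂) : Matrix (Fin d) (Fin d) 𝕂 →L[𝕂] (Fin d → 𝕂) :=
  LinearMap.toContinuousLinearMap
    { toFun := fun A : Matrix (Fin d) (Fin d) 𝕂 => A *ᵥ v
      map_add' := fun A B => Matrix.add_mulVec A B v
      map_smul' := fun c A => Matrix.smul_mulVec c A v }

@[simp] lemma mulVecCLM_apply (v : Fin d → 𝕂) (A : Matrix (Fin d) (Fin d) 𝕂) :
    mulVecCLM v A = A *ᵥ v := rfl

lemma pow_mulVec_eigen {M : Matrix (Fin d) (Fin d) 𝕂} {μ : 𝕂} {v : Fin d → 𝕂}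
    (h : M *ᵥ v = μ • v) (n : ℕ) : (M ^ n) *ᵥ v = μ ^ n • v := by
  induction n with
  | zero => simp
  | succ n ih =>
      rw [pow_succ, ← Matrix.mulVec_mulVec, h, Matrix.mulVec_smul, ih, smul_smul, pow_succ]
      ring_nf

lemma S_mulVec_eigen {M : Matrix (Fin d) (Fin d) ℂ} {μ : ℂ} {v : Fin d → ℂ}
    (h : M *ᵥ v = μ • v) : (S ℂ M) *ᵥ v = F μ • v := by
  have h1 : (S ℂ M) *ᵥ v = mulVecCLM v (S ℂ M) := rfl
  rw [h1, S, (mulVecCLM v).map_tsum (summable_S M)]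
  have h2 : ∀ n : ℕ, mulVecCLM v (((Nat.factorial (n+1) : ℂ))⁻¹ • M ^ n)
      = (((Nat.factorial (n+1) : ℂ))⁻¹ * μ ^ n) • v := by
    intro n
    rw [_root_.map_smul, mulVecCLM_apply, pow_mulVec_eigen h, smul_smul]
  rw [tsum_congr h2, Summable.tsum_smul_const (summable_F μ), F]

lemma not_isUnit_iff_exists (N : Matrix (Fin d) (Fin d) ℂ) :
    ¬ IsUnit N ↔ ∃ v ≠ 0, N *ᵥ v = 0 := by
  rw [Matrix.exists_mulVec_eq_zero_iff, Matrix.isUnit_iff_isUnit_det, isUnit_iff_ne_zero,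
    not_ne_iff]

lemma spec_iff (N : Matrix (Fin d) (Fin d) ℂ) (μ : ℂ) :
    μ ∈ spectrum ℂ N ↔ ∃ v ≠ 0, N *ᵥ v = μ • v := by
  rw [spectrum.mem_iff, not_isUnit_iff_exists]
  refine exists_congr fun v => and_congr_right fun hv => ?_
  rw [Algebra.algebraMap_eq_smul_one, Matrix.sub_mulVec, Matrix.smul_mulVec,
    Matrix.one_mulVec, sub_eq_zero, eq_comm]

lemma mulVec_injective_of_isUnit {N : Matrix (Fin d) (Fin d) ℂ} (h : IsUnit N)
    {v : Fin d → ℂ} (hv : N *ᵥ v = 0) : v = 0 := by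
  have h1 : N⁻¹ * N = 1 := Matrix.nonsing_inv_mul _ ((Matrix.isUnit_iff_isUnit_det _).1 h)
  calc v = (N⁻¹ * N) *ᵥ v := by rw [h1, Matrix.one_mulVec]
  _ = N⁻¹ *ᵥ (N *ᵥ v) := (Matrix.mulVec_mulVec _ _ _).symm
  _ = 0 := by rw [hv, Matrix.mulVec_zero]

lemma isUnit_S_iff (M : Matrix (Fin d) (Fin d) ℂ) :
    IsUnit (S ℂ M) ↔ ∀ μ ∈ spectrum ℂ M, F μ ≠ 0 := by
  constructor
  · intro hU μ hμ hF0
    obtain ⟨v, hv, hev⟩ := (spec_iff M μ).1 hμ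
    have h0 : (S ℂ M) *ᵥ v = 0 := by rw [S_mulVec_eigen hev, hF0, zero_smul]
    exact hv (mulVec_injective_of_isUnit hU h0)
  · intro h
    by_contra hU
    obtain ⟨v, hv, hv0⟩ := (not_isUnit_iff_exists _).1 hU
    set K := LinearMap.ker (S ℂ M).mulVecLin with hK
    have hvK : v ∈ K := by simpa [hK, Matrix.mulVecLin_apply] using hv0
    have hKne : Nontrivial K := by
      refine Submodule.nontrivial_iff_ne_bot.2 fun hbot => hv ?_
      simpa [hbot] using hvK
    have hinv : ∀ x ∈ K, M.mulVecLin x ∈ K := by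
      intro x hx
      simp only [hK, LinearMap.mem_ker, Matrix.mulVecLin_apply] at hx ⊢
      rw [Matrix.mulVec_mulVec, ← (commute_S M).eq, ← Matrix.mulVec_mulVec, hx,
        Matrix.mulVec_zero]
    set g : Module.End ℂ K := (M.mulVecLin).restrict hinv with hg
    obtain ⟨μ, hμ⟩ := Module.End.exists_eigenvalue g
    obtain ⟨w, hw⟩ := hμ.exists_hasEigenvector
    have hwe : M *ᵥ (w : Fin d → ℂ) = μ • (w : Fin d → ℂ) := by
      have h1 : ((g w : K) : Fin d → ℂ) = M.mulVecLin (w : Fin d → ℂ) :=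
        LinearMap.restrict_coe_apply _ _ _
      have h2 : g w = μ • w := hw.apply_eq_smul
      rw [← Matrix.mulVecLin_apply, ← h1, h2, Submodule.coe_smul]
    have hwne : (w : Fin d → ℂ) ≠ 0 := by
      simpa [Submodule.coe_eq_zero] using hw.right
    have hμspec : μ ∈ spectrum ℂ M := (spec_iff M μ).2 ⟨(w : Fin d → ℂ), hwne, hwe⟩
    have hSw : (S ℂ M) *ᵥ (w : Fin d → ℂ) = 0 := by
      have hw2 : (w : Fin d → ℂ) ∈ LinearMap.ker (S ℂ M).mulVecLin := w.2
      rw [LinearMap.mem_ker] at hw2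
      rwa [Matrix.mulVecLin_apply] at hw2
    have hF : F μ • (w : Fin d → ℂ) = 0 := by rw [← S_mulVec_eigen hwe, hSw]
    rcases smul_eq_zero.1 hF with h0 | h0
    · exact h μ hμspec h0
    · exact hwne h0

/-- entrywise complexification as a continuous linear map -/
def mapCLM : Matrix (Fin d) (Fin d) ℝ →L[ℝ] Matrix (Fin d) (Fin d) ℂ :=
  LinearMap.toContinuousLinearMap (AlgHom.mapMatrix (Algebra.ofId ℝ ℂ)).toLinearMap

@[simp] lemma mapCLM_apply (A : Matrix (Fin d) (Fin d) ℝ) :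
    mapCLM A = A.map (algebraMap ℝ ℂ) := rfl

lemma real_smul_mat (r : ℝ) (X : Matrix (Fin d) (Fin d) ℂ) : r • X = (r : ℂ) • X := by
  ext i j
  simp [Matrix.smul_apply, Complex.real_smul]

lemma map_S (M : Matrix (Fin d) (Fin d) ℝ) :
    (S ℝ M).map (algebraMap ℝ ℂ) = S ℂ (M.map (algebraMap ℝ ℂ)) := by
  have h1 : mapCLM (S ℝ M) = ∑' n : ℕ,
      mapCLM (((Nat.factorial (n+1) : ℝ))⁻¹ • M ^ n) := mapCLM.map_tsum (summable_S M)
  rw [← mapCLM_apply, h1, S]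
  refine tsum_congr fun n => ?_
  rw [_root_.map_smul, mapCLM_apply, real_smul_mat]
  congr 1
  · push_cast; simp
  · calc (M ^ n).map (algebraMap ℝ ℂ) = (algebraMap ℝ ℂ).mapMatrix (M ^ n) := rfl
    _ = ((algebraMap ℝ ℂ).mapMatrix M) ^ n := by rw [map_pow]
    _ = (M.map (algebraMap ℝ ℂ)) ^ n := rfl

lemma isUnit_S_real_iff (M : Matrix (Fin d) (Fin d) ℝ) :
    IsUnit (S ℝ M) ↔ ∀ μ ∈ spectrum ℂ (M.map (algebraMap ℝ ℂ)),
      ∀ k : ℤ, k ≠ 0 → μ ≠ 2 * Real.pi * Complex.I * k := by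
  have h1 : IsUnit (S ℝ M) ↔ IsUnit (S ℂ (M.map (algebraMap ℝ ℂ))) := by
    rw [← map_S, Matrix.isUnit_iff_isUnit_det, Matrix.isUnit_iff_isUnit_det]
    have hd : ((S ℝ M).map (algebraMap ℝ ℂ)).det = algebraMap ℝ ℂ (S ℝ M).det := by
      rw [← RingHom.mapMatrix_apply, ← RingHom.map_det]
    rw [hd, isUnit_iff_ne_zero, isUnit_iff_ne_zero]
    simp [Complex.ofReal_ne_zero]
  rw [h1, isUnit_S_iff]
  exact forall₂_congr fun μ _ => F_ne_zero_iff μ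

open MeasureTheory in
lemma integral_exp_eq_S (M : Matrix (Fin d) (Fin d) ℝ) :
    (∫ t in (0:ℝ)..1, exp (t • M)) = S ℝ M := by
  set c : ℕ → ℝ := fun n => ((Nat.factorial n : ℝ))⁻¹ with hc
  have hterm : ∀ t : ℝ, exp (t • M) = ∑' n : ℕ, (t ^ n * c n) • M ^ n := by
    intro t
    rw [exp_eq_tsum (𝕂 := ℝ)]
    refine tsum_congr fun n => ?_
    rw [smul_pow, smul_smul, mul_comm]
  letI : ContinuousENorm (Matrix (Fin d) (Fin d) ℝ) := SeminormedAddGroup.toContinuousENorm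
  have hint : ∀ n : ℕ, IntegrableOn (fun t : ℝ => (t ^ n * c n) • M ^ n)
      (Set.Ioc (0:ℝ) 1) volume := by
    intro n
    exact Continuous.integrableOn_Ioc (by fun_prop)
  have hnorm : ∀ n : ℕ, ∀ t ∈ Set.Ioc (0:ℝ) 1,
      ‖(t ^ n * c n) • M ^ n‖ ≤ ‖M‖ ^ n / (Nat.factorial n) := by
    intro n t ht
    rw [norm_smul]
    have h1 : |t ^ n * c n| ≤ c n := by
      rw [abs_mul]
      have ht1 : |t ^ n| ≤ 1 := by
        rw [abs_pow]
        exact pow_le_one₀ (abs_nonneg t) (abs_le.2 ⟨by linarith [ht.1], ht.2⟩)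
      have : |c n| = c n := abs_of_nonneg (by positivity)
      nlinarith [abs_nonneg (t ^ n), abs_nonneg (c n), this]
    calc ‖t ^ n * c n‖ * ‖M ^ n‖ ≤ c n * ‖M‖ ^ n := by
          exact mul_le_mul h1 (norm_pow_le_mat M n) (norm_nonneg _) (by positivity)
    _ = ‖M‖ ^ n / (Nat.factorial n) := by rw [hc]; ring
  have hsum : Summable fun n : ℕ => ∫ t in Set.Ioc (0:ℝ) 1, ‖(t ^ n * c n) • M ^ n‖ := by
    refine Summable.of_nonneg_of_le (fun n => integral_nonneg fun t => norm_nonneg _)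
      (fun n => ?_) (Real.summable_pow_div_factorial ‖M‖)
    calc (∫ t in Set.Ioc (0:ℝ) 1, ‖(t ^ n * c n) • M ^ n‖)
        ≤ ∫ _ in Set.Ioc (0:ℝ) 1, ‖M‖ ^ n / (Nat.factorial n) := by
          refine setIntegral_mono_on ((hint n).norm) (integrableOn_const ?_)
            measurableSet_Ioc (hnorm n)
          rw [Real.volume_Ioc]; exact ENNReal.ofReal_ne_top
    _ = ‖M‖ ^ n / (Nat.factorial n) := by
          rw [setIntegral_const, Real.volume_real_Ioc]
          norm_num
  have key : ∑' n : ℕ, (∫ t in Set.Ioc (0:ℝ) 1, (t ^ n * c n) • M ^ n)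
      = ∫ t in Set.Ioc (0:ℝ) 1, ∑' n : ℕ, (t ^ n * c n) • M ^ n :=
    integral_tsum_of_summable_integral_norm hint hsum
  have hpt : ∀ n : ℕ, (∫ t in Set.Ioc (0:ℝ) 1, (t ^ n * c n) • M ^ n)
      = ((Nat.factorial (n+1) : ℝ))⁻¹ • M ^ n := by
    intro n
    rw [integral_smul_const]
    congr 1
    rw [integral_mul_const]
    have h2 : (∫ t in Set.Ioc (0:ℝ) 1, t ^ n) = ((n : ℝ) + 1)⁻¹ := by
      rw [← intervalIntegral.integral_of_le zero_le_one, integral_pow]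
      norm_num
    rw [h2, hc]
    have h3 : ((Nat.factorial (n+1) : ℝ)) = ((n : ℝ) + 1) * (Nat.factorial n : ℝ) := by
      push_cast [Nat.factorial_succ]; ring
    rw [h3, mul_inv]
  rw [intervalIntegral.integral_of_le zero_le_one]
  calc (∫ t in Set.Ioc (0:ℝ) 1, exp (t • M))
      = ∫ t in Set.Ioc (0:ℝ) 1, ∑' n : ℕ, (t ^ n * c n) • M ^ n := by
        exact setIntegral_congr_fun measurableSet_Ioc fun t _ => hterm t
  _ = ∑' n : ℕ, (∫ t in Set.Ioc (0:ℝ) 1, (t ^ n * c n) • M ^ n) := key.symm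
  _ = S ℝ M := by rw [S]; exact tsum_congr hpt

section ODE

variable (M : Matrix (Fin d) (Fin d) ℝ)

lemma cont_E : Continuous fun t : ℝ => exp (t • M) :=
  exp_continuous.comp (continuous_id.smul continuous_const)

lemma hasDerivAt_P (x : ℝ) :
    HasDerivAt (fun u : ℝ => ∫ t in (0:ℝ)..u, exp (t • M)) (exp (x • M)) x :=
  ((cont_E M).integral_hasStrictDerivAt 0 x).hasDerivAt

/-- `Q *ᵥ ·` as a continuous linear map. -/
def mulVecLCLM {d' : ℕ} (Q : Matrix (Fin d') (Fin d) ℝ) : (Fin d → ℝ) →L[ℝ] (Fin d' → ℝ) :=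
  LinearMap.toContinuousLinearMap (Matrix.mulVecLin Q)

@[simp] lemma mulVecLCLM_apply {d' : ℕ} (Q : Matrix (Fin d') (Fin d) ℝ) (v : Fin d → ℝ) :
    mulVecLCLM Q v = Q *ᵥ v := rfl

lemma hasDerivAt_Pv (c : Fin d → ℝ) (x : ℝ) :
    HasDerivAt (fun u : ℝ => (∫ t in (0:ℝ)..u, exp (t • M)) *ᵥ c)
      (exp (x • M) *ᵥ c) x :=
  ((mulVecCLM c).hasFDerivAt.comp_hasDerivAt x (hasDerivAt_P M x))

lemma hasDerivAt_Ev (c : Fin d → ℝ) (x : ℝ) :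
    HasDerivAt (fun u : ℝ => exp (u • M) *ᵥ c)
      (M *ᵥ (exp (x • M) *ᵥ c)) x := by
  have h := (mulVecCLM c).hasFDerivAt.comp_hasDerivAt x (hasDerivAt_exp_smul_const' M x)
  rw [Matrix.mulVec_mulVec]; exact h

lemma exp_zero_mulVec (c : Fin d → ℝ) : exp ((0:ℝ) • M) *ᵥ c = c := by
  rw [zero_smul, exp_zero, Matrix.one_mulVec]

lemma ode_unique {f : ℝ → Fin d → ℝ}
    (hf : ∀ x ∈ Set.Icc (0:ℝ) 1, HasDerivAt f (M *ᵥ f x) x) :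
    Set.EqOn f (fun x => exp (x • M) *ᵥ f 0) (Set.Icc 0 1) := by
  have hL : ∀ t : ℝ, LipschitzWith ‖mulVecLCLM M‖₊ (fun y : Fin d → ℝ => M *ᵥ y) := by
    intro t
    have := (mulVecLCLM M).lipschitz
    exact this
  refine ODE_solution_unique (v := fun _ y => M *ᵥ y) hL
    (fun x hx => (hf x hx).continuousAt.continuousWithinAt)
    (fun t ht => ((hf t (Set.mem_Icc_of_Ico ht)).hasDerivWithinAt))
    (fun x _ => ((hasDerivAt_Ev M (f 0) x).continuousAt.continuousWithinAt))
    (fun t _ => (hasDerivAt_Ev M (f 0) t).hasDerivWithinAt) ?_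
  rw [exp_zero_mulVec]

end ODE

end Stmt14X

/-- `U` is a (twice continuously differentiable) solution of the steady boundary-value problem
`A U′ = B U″` on `[0,1]` with `U(0) = U₀` and `U_{II}(1) = U1II`. -/
def IsLinSteadySol {r s : ℕ} (A B : Matrix (Fin r ⊕ Fin s) (Fin r ⊕ Fin s) ℝ)
    (U₀ : Fin r ⊕ Fin s → ℝ) (U1II : Fin s → ℝ) (U : ℝ → Fin r ⊕ Fin s → ℝ) : Prop :=
  ∃ U' U'' : ℝ → Fin r ⊕ Fin s → ℝ,
    (∀ x ∈ Set.Icc (0:ℝ) 1, HasDerivAt U (U' x) x ∧ HasDerivAt U' (U'' x) x) ∧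
    ContinuousOn U'' (Set.Icc 0 1) ∧
    (∀ x ∈ Set.Icc (0:ℝ) 1, A.mulVec (U' x) = B.mulVec (U'' x)) ∧
    U 0 = U₀ ∧ ∀ i, U 1 (Sum.inr i) = U1II i

namespace Stmt14X
section BVP

attribute [local instance] Matrix.linftyOpNormedAddCommGroup Matrix.linftyOpNormedRing
  Matrix.linftyOpNormedAlgebra

variable {r s : ℕ} [NeZero s]
variable (A11 : Matrix (Fin r) (Fin r) ℝ) (A12 : Matrix (Fin r) (Fin s) ℝ)
    (A21 : Matrix (Fin s) (Fin r) ℝ) (A22 B22 : Matrix (Fin s) (Fin s) ℝ)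

/-- the reduced matrix -/
def Mm : Matrix (Fin s) (Fin s) ℝ := B22⁻¹ * (A22 - A21 * A11⁻¹ * A12)

/-- the explicit solution -/
def solF (Q : Matrix (Fin r) (Fin s) ℝ) (M : Matrix (Fin s) (Fin s) ℝ)
    (V₀ : Fin r → ℝ) (W₀ : Fin s → ℝ) (c : Fin s → ℝ) : ℝ → (Fin r ⊕ Fin s → ℝ) :=
  fun x => Sum.elim
    (fun i => V₀ i - (Q *ᵥ ((∫ t in (0:ℝ)..x, exp (t • M)) *ᵥ c)) i)
    (fun i => W₀ i + ((∫ t in (0:ℝ)..x, exp (t • M)) *ᵥ c) i)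

lemma solF_isSol (hA : IsUnit A11.det) (hB : IsUnit B22.det)
    (V₀ : Fin r → ℝ) (W₀ : Fin s → ℝ) (c : Fin s → ℝ) :
    IsLinSteadySol (Matrix.fromBlocks A11 A12 A21 A22) (Matrix.fromBlocks 0 0 0 B22)
      (Sum.elim V₀ W₀) (fun i => W₀ i + ((S ℝ (Mm A11 A12 A21 A22 B22)) *ᵥ c) i)
      (solF (A11⁻¹ * A12) (Mm A11 A12 A21 A22 B22) V₀ W₀ c) := by
  set M : Matrix (Fin s) (Fin s) ℝ := Mm A11 A12 A21 A22 B22 with hM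
  set Q : Matrix (Fin r) (Fin s) ℝ := A11⁻¹ * A12 with hQ
  refine ⟨fun x => Sum.elim (fun i => -(Q *ᵥ (exp (x • M) *ᵥ c)) i)
      (fun i => (exp (x • M) *ᵥ c) i),
    fun x => Sum.elim (fun i => -(Q *ᵥ (M *ᵥ (exp (x • M) *ᵥ c))) i)
      (fun i => (M *ᵥ (exp (x • M) *ᵥ c)) i),
    ?_, ?_, ?_, ?_, ?_⟩
  · intro x _
    have hw' := hasDerivAt_Pv M c x
    have hQw : HasDerivAt (fun u => Q *ᵥ ((∫ t in (0:ℝ)..u, exp (t • M)) *ᵥ c))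
        (Q *ᵥ (exp (x • M) *ᵥ c)) x :=
      (mulVecLCLM Q).hasFDerivAt.comp_hasDerivAt x hw'
    have hEv : HasDerivAt (fun u => exp (u • M) *ᵥ c)
        (M *ᵥ (exp (x • M) *ᵥ c)) x := hasDerivAt_Ev M c x
    have hQE : HasDerivAt (fun u => Q *ᵥ (exp (u • M) *ᵥ c))
        (Q *ᵥ (M *ᵥ (exp (x • M) *ᵥ c))) x :=
      (mulVecLCLM Q).hasFDerivAt.comp_hasDerivAt x hEv
    constructor
    · rw [hasDerivAt_pi]
      rintro (i | i)
      · simpa [solF, Pi.sub_def] using ((hasDerivAt_const x (V₀ i)).sub (hasDerivAt_pi.1 hQw i))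
      · simpa [solF, Pi.add_def] using ((hasDerivAt_const x (W₀ i)).add (hasDerivAt_pi.1 hw' i))
    · rw [hasDerivAt_pi]
      rintro (i | i)
      · simpa [Pi.neg_def] using (hasDerivAt_pi.1 hQE i).neg
      · exact hasDerivAt_pi.1 hEv i
  · apply Continuous.continuousOn
    have hMEc : Continuous fun x : ℝ => M *ᵥ (exp (x • M) *ᵥ c) :=
      (mulVecLCLM M).continuous.comp ((mulVecCLM c).continuous.comp (cont_E M))
    apply continuous_pi
    rintro (i | i)
    · exact ((continuous_apply i).comp ((mulVecLCLM Q).continuous.comp hMEc)).neg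
    · exact (continuous_apply i).comp hMEc
  · intro x _
    rw [Matrix.fromBlocks_mulVec, Matrix.fromBlocks_mulVec]
    have e1 : (Sum.elim (fun i => -(Q *ᵥ (exp (x • M) *ᵥ c)) i)
        (fun i => (exp (x • M) *ᵥ c) i)) ∘ Sum.inl = -(Q *ᵥ (exp (x • M) *ᵥ c)) := rfl
    have e2 : (Sum.elim (fun i => -(Q *ᵥ (exp (x • M) *ᵥ c)) i)
        (fun i => (exp (x • M) *ᵥ c) i)) ∘ Sum.inr = exp (x • M) *ᵥ c := rfl
    have e3 : (Sum.elim (fun i => -(Q *ᵥ (M *ᵥ (exp (x • M) *ᵥ c))) i)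
        (fun i => (M *ᵥ (exp (x • M) *ᵥ c)) i)) ∘ Sum.inl
        = -(Q *ᵥ (M *ᵥ (exp (x • M) *ᵥ c))) := rfl
    have e4 : (Sum.elim (fun i => -(Q *ᵥ (M *ᵥ (exp (x • M) *ᵥ c))) i)
        (fun i => (M *ᵥ (exp (x • M) *ᵥ c)) i)) ∘ Sum.inr
        = M *ᵥ (exp (x • M) *ᵥ c) := rfl
    rw [e1, e2, e3, e4]
    have c1 : ∀ q : Fin s → ℝ, A11 *ᵥ (-(Q *ᵥ q)) + A12 *ᵥ q = (0 : Fin r → ℝ) := by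
      intro q
      rw [Matrix.mulVec_neg, Matrix.mulVec_mulVec, hQ, ← Matrix.mul_assoc,
        Matrix.mul_nonsing_inv _ hA, Matrix.one_mul, neg_add_cancel]
    have key : B22 * Mm A11 A12 A21 A22 B22 = A22 - A21 * A11⁻¹ * A12 := by
      unfold Mm
      rw [← Matrix.mul_assoc, Matrix.mul_nonsing_inv _ hB, Matrix.one_mul]
    have c2 : ∀ q : Fin s → ℝ, A21 *ᵥ (-(Q *ᵥ q)) + A22 *ᵥ q = B22 *ᵥ (M *ᵥ q) := by
      intro q
      rw [Matrix.mulVec_neg, Matrix.mulVec_mulVec, Matrix.mulVec_mulVec, hM, key, hQ,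
        Matrix.sub_mulVec, ← Matrix.mul_assoc, neg_add_eq_sub]
    rw [c1 _, c2 _, Matrix.zero_mulVec, Matrix.zero_mulVec, Matrix.zero_mulVec, add_zero,
      zero_add]
  · funext i
    cases i <;> simp [solF, intervalIntegral.integral_same, Matrix.zero_mulVec]
  · intro i
    simp only [solF, Sum.elim_inr]
    rw [integral_exp_eq_S]


lemma mulVec_inj_real {n : ℕ} {N : Matrix (Fin n) (Fin n) ℝ} (h : IsUnit N)
    {v : Fin n → ℝ} (hv : N *ᵥ v = 0) : v = 0 := by
  have h1 : N⁻¹ * N = 1 := Matrix.nonsing_inv_mul _ ((Matrix.isUnit_iff_isUnit_det _).1 h)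
  calc v = (N⁻¹ * N) *ᵥ v := by rw [h1, Matrix.one_mulVec]
  _ = N⁻¹ *ᵥ (N *ᵥ v) := (Matrix.mulVec_mulVec _ _ _).symm
  _ = 0 := by rw [hv, Matrix.mulVec_zero]

lemma sol_unique (hA : IsUnit A11.det) (hB : IsUnit B22.det)
    (hG : IsUnit (S ℝ (Mm A11 A12 A21 A22 B22)))
    {U₀ : Fin r ⊕ Fin s → ℝ} {U1II : Fin s → ℝ} {U V : ℝ → Fin r ⊕ Fin s → ℝ}
    (hU : IsLinSteadySol (Matrix.fromBlocks A11 A12 A21 A22) (Matrix.fromBlocks 0 0 0 B22)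
      U₀ U1II U)
    (hV : IsLinSteadySol (Matrix.fromBlocks A11 A12 A21 A22) (Matrix.fromBlocks 0 0 0 B22)
      U₀ U1II V) : Set.EqOn U V (Set.Icc 0 1) := by
  set M : Matrix (Fin s) (Fin s) ℝ := Mm A11 A12 A21 A22 B22 with hM
  obtain ⟨U', U'', hUd, -, hUeq, hU0, hU1⟩ := hU
  obtain ⟨V', V'', hVd, -, hVeq, hV0, hV1⟩ := hV
  set p : ℝ → Fin r → ℝ := fun x i => (U' x - V' x) (Sum.inl i) with hp
  set q : ℝ → Fin s → ℝ := fun x i => (U' x - V' x) (Sum.inr i) with hq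
  set q2 : ℝ → Fin s → ℝ := fun x i => (U'' x - V'' x) (Sum.inr i) with hq2
  have hDeq : ∀ x ∈ Set.Icc (0:ℝ) 1,
      (Matrix.fromBlocks A11 A12 A21 A22) *ᵥ (U' x - V' x)
        = (Matrix.fromBlocks 0 0 0 B22) *ᵥ (U'' x - V'' x) := by
    intro x hx
    rw [Matrix.mulVec_sub, Matrix.mulVec_sub, hUeq x hx, hVeq x hx]
  have hblocks : ∀ x ∈ Set.Icc (0:ℝ) 1,
      A11 *ᵥ p x + A12 *ᵥ q x = 0 ∧ A21 *ᵥ p x + A22 *ᵥ q x = B22 *ᵥ q2 x := by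
    intro x hx
    have h := hDeq x hx
    rw [Matrix.fromBlocks_mulVec, Matrix.fromBlocks_mulVec] at h
    constructor
    · funext i
      have := congrFun h (Sum.inl i)
      simpa [hp, hq, Function.comp_def] using this
    · funext i
      have := congrFun h (Sum.inr i)
      simpa [hp, hq, hq2, Function.comp_def] using this
  have hpq : ∀ x ∈ Set.Icc (0:ℝ) 1, p x = -((A11⁻¹ * A12) *ᵥ q x) := by
    intro x hx
    have h1 : A11 *ᵥ p x = -(A12 *ᵥ q x) := eq_neg_of_add_eq_zero_left (hblocks x hx).1
    have h2 : A11⁻¹ * A11 = 1 := Matrix.nonsing_inv_mul _ hA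
    calc p x = (A11⁻¹ * A11) *ᵥ p x := by rw [h2, Matrix.one_mulVec]
    _ = A11⁻¹ *ᵥ (A11 *ᵥ p x) := (Matrix.mulVec_mulVec _ _ _).symm
    _ = A11⁻¹ *ᵥ (-(A12 *ᵥ q x)) := by rw [h1]
    _ = -((A11⁻¹ * A12) *ᵥ q x) := by rw [Matrix.mulVec_neg, Matrix.mulVec_mulVec]
  have key : B22 * M = A22 - A21 * A11⁻¹ * A12 := by
    rw [hM]; unfold Mm
    rw [← Matrix.mul_assoc, Matrix.mul_nonsing_inv _ hB, Matrix.one_mul]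
  have hq2M : ∀ x ∈ Set.Icc (0:ℝ) 1, q2 x = M *ᵥ q x := by
    intro x hx
    have h1 := (hblocks x hx).2
    rw [hpq x hx] at h1
    have h2 : B22 *ᵥ (M *ᵥ q x) = B22 *ᵥ q2 x := by
      rw [Matrix.mulVec_mulVec, key, ← h1, Matrix.mulVec_neg, Matrix.mulVec_mulVec,
        Matrix.sub_mulVec, ← Matrix.mul_assoc, neg_add_eq_sub]
    have h3 : B22 *ᵥ (q2 x - M *ᵥ q x) = 0 := by
      rw [Matrix.mulVec_sub, h2, sub_self]
    have h4 := mulVec_inj_real ((Matrix.isUnit_iff_isUnit_det _).2 hB) h3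
    have := sub_eq_zero.1 h4
    exact this
  have hqD : ∀ x ∈ Set.Icc (0:ℝ) 1, HasDerivAt q (M *ᵥ q x) x := by
    intro x hx
    rw [← hq2M x hx]
    rw [hasDerivAt_pi]
    intro i
    have h1 := hasDerivAt_pi.1 (hUd x hx).2 (Sum.inr i)
    have h2 := hasDerivAt_pi.1 (hVd x hx).2 (Sum.inr i)
    simpa [hq, hq2, Pi.sub_def] using h1.sub h2
  have hq_eq : Set.EqOn q (fun x => exp (x • M) *ᵥ q 0) (Set.Icc 0 1) := ode_unique M hqD
  -- FTC for the inr-components of U - V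
  have hdII : ∀ x ∈ Set.uIcc (0:ℝ) 1,
      HasDerivAt (fun u => (fun i => (U u - V u) (Sum.inr i))) (exp (x • M) *ᵥ q 0) x := by
    intro x hx
    rw [Set.uIcc_of_le zero_le_one] at hx
    rw [show exp (x • M) *ᵥ q 0 = q x from (hq_eq hx).symm]
    rw [hasDerivAt_pi]
    intro i
    have h1 := hasDerivAt_pi.1 (hUd x hx).1 (Sum.inr i)
    have h2 := hasDerivAt_pi.1 (hVd x hx).1 (Sum.inr i)
    simpa [hq, Pi.sub_def] using h1.sub h2
  have hInt : IntervalIntegrable (fun t => exp (t • M) *ᵥ q 0) MeasureTheory.volume 0 1 :=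
    ((mulVecCLM (q 0)).continuous.comp (cont_E M)).intervalIntegrable 0 1
  have hftc := intervalIntegral.integral_eq_sub_of_hasDerivAt hdII hInt
  have hIcomm : (∫ t in (0:ℝ)..1, exp (t • M) *ᵥ q 0)
      = (S ℝ M) *ᵥ q 0 := by
    have h1 : (∫ t in (0:ℝ)..1, (mulVecCLM (q 0)) (exp (t • M)))
        = (mulVecCLM (q 0)) (∫ t in (0:ℝ)..1, exp (t • M)) :=
      (mulVecCLM (q 0)).intervalIntegral_comp_comm ((cont_E M).intervalIntegrable 0 1)
    rw [← integral_exp_eq_S, ← mulVecCLM_apply (𝕂 := ℝ) (q 0), ← h1]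
    rfl
  have hbd : (fun i => (U 1 - V 1) (Sum.inr i)) = (0 : Fin s → ℝ) := by
    funext i
    simp [Pi.sub_apply, hU1 i, hV1 i]
  have hbd0 : (fun i => (U 0 - V 0) (Sum.inr i)) = (0 : Fin s → ℝ) := by
    funext i
    simp [Pi.sub_apply, hU0, hV0]
  rw [hIcomm, hbd, hbd0, sub_zero] at hftc
  have hq0 : q 0 = 0 := mulVec_inj_real hG hftc
  have hqzero : ∀ x ∈ Set.Icc (0:ℝ) 1, q x = 0 := by
    intro x hx
    simpa [hq0, Matrix.mulVec_zero] using hq_eq hx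
  have hD'zero : ∀ x ∈ Set.Icc (0:ℝ) 1, U' x - V' x = 0 := by
    intro x hx
    funext i
    cases i with
    | inl i =>
        have := congrFun (hpq x hx) i
        rw [hqzero x hx] at this
        simpa [hp] using this
    | inr i =>
        have := congrFun (hqzero x hx) i
        simpa [hq] using this
  have hDconst : ∀ x ∈ Set.Icc (0:ℝ) 1, U x - V x = U 0 - V 0 := by
    refine constant_of_has_deriv_right_zero (f := fun x => U x - V x) ?_ ?_
    · intro x hx
      exact (((hUd x hx).1.sub (hVd x hx).1)).continuousAt.continuousWithinAt
    · intro x hx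
      have hx' : x ∈ Set.Icc (0:ℝ) 1 := Set.mem_Icc_of_Ico hx
      have h := ((hUd x hx').1.sub (hVd x hx').1)
      rw [hD'zero x hx'] at h
      exact h.hasDerivWithinAt
  intro x hx
  have := hDconst x hx
  rw [hU0, hV0, sub_self] at this
  exact sub_eq_zero.1 this


lemma zero_sol : IsLinSteadySol (Matrix.fromBlocks A11 A12 A21 A22)
    (Matrix.fromBlocks 0 0 0 B22) 0 0 (fun _ => 0) :=
  ⟨fun _ => 0, fun _ => 0, fun x _ => ⟨hasDerivAt_const _ _, hasDerivAt_const _ _⟩,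
    continuousOn_const, fun x _ => by simp [Matrix.mulVec_zero], rfl, fun i => rfl⟩

lemma congr_data {A B : Matrix (Fin r ⊕ Fin s) (Fin r ⊕ Fin s) ℝ}
    {U₀ U₀' : Fin r ⊕ Fin s → ℝ} {U1II U1II' : Fin s → ℝ} {U : ℝ → Fin r ⊕ Fin s → ℝ}
    (h : IsLinSteadySol A B U₀ U1II U) (h0 : U₀ = U₀') (h1 : U1II = U1II') :
    IsLinSteadySol A B U₀' U1II' U := h0 ▸ h1 ▸ h

lemma b22_unit (hB : (B22 + B22ᵀ).PosDef) : IsUnit B22.det := by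
  rw [isUnit_iff_ne_zero]
  intro hdet
  obtain ⟨v, hv, hv0⟩ := Matrix.exists_mulVec_eq_zero_iff.2 hdet
  have hpos := hB.dotProduct_mulVec_pos hv
  have hdot : star v ⬝ᵥ ((B22 + B22ᵀ) *ᵥ v) = 0 := by
    rw [Matrix.add_mulVec, hv0, zero_add, star_trivial, Matrix.dotProduct_mulVec,
      Matrix.vecMul_transpose, hv0, zero_dotProduct]
  rw [hdot] at hpos
  simp at hpos

lemma a11_unit {r' : ℕ} {A : Matrix (Fin r') (Fin r') ℝ}
    (hA : ∀ μ ∈ spectrum ℂ (A.map (algebraMap ℝ ℂ)), 0 < μ.re) : IsUnit A.det := by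
  rw [isUnit_iff_ne_zero]
  intro hdet
  have h0 : ¬ IsUnit (A.map (algebraMap ℝ ℂ)) := by
    rw [Matrix.isUnit_iff_isUnit_det]
    have hd : (A.map (algebraMap ℝ ℂ)).det = algebraMap ℝ ℂ A.det := by
      rw [← RingHom.mapMatrix_apply, ← RingHom.map_det]
    rw [hd, hdet, map_zero]
    exact not_isUnit_zero
  have hmem : (0 : ℂ) ∈ spectrum ℂ (A.map (algebraMap ℝ ℂ)) := (spectrum.zero_mem_iff ℂ).2 h0
  have := hA 0 hmem
  simp at this

end BVP
end Stmt14X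

/-- Proposition (steadyprop) -/
theorem stmt14 (r s : ℕ) (hr : 1 ≤ r) (hs : 1 ≤ s)
    (A11 : Matrix (Fin r) (Fin r) ℝ) (A12 : Matrix (Fin r) (Fin s) ℝ)
    (A21 : Matrix (Fin s) (Fin r) ℝ) (A22 B22 : Matrix (Fin s) (Fin s) ℝ)
    (hB : (B22 + B22ᵀ).PosDef)
    (hA11 : ∀ μ ∈ spectrum ℂ (A11.map (algebraMap ℝ ℂ)), 0 < μ.re) :
    (∀ (U₀ : Fin r ⊕ Fin s → ℝ) (U1II : Fin s → ℝ),
      (∃ U, IsLinSteadySol (Matrix.fromBlocks A11 A12 A21 A22)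
          (Matrix.fromBlocks 0 0 0 B22) U₀ U1II U) ∧
      (∀ U V, IsLinSteadySol (Matrix.fromBlocks A11 A12 A21 A22)
            (Matrix.fromBlocks 0 0 0 B22) U₀ U1II U →
          IsLinSteadySol (Matrix.fromBlocks A11 A12 A21 A22)
            (Matrix.fromBlocks 0 0 0 B22) U₀ U1II V →
          Set.EqOn U V (Set.Icc 0 1))) ↔
    (∀ μ ∈ spectrum ℂ ((B22⁻¹ * (A22 - A21 * A11⁻¹ * A12)).map (algebraMap ℝ ℂ)),
      ∀ k : ℤ, k ≠ 0 → μ ≠ 2 * Real.pi * Complex.I * k) := by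
  haveI : NeZero s := ⟨by omega⟩
  have hAu : IsUnit A11.det := Stmt14X.a11_unit hA11
  have hBu : IsUnit B22.det := Stmt14X.b22_unit B22 hB
  rw [show (B22⁻¹ * (A22 - A21 * A11⁻¹ * A12)) = Stmt14X.Mm A11 A12 A21 A22 B22 from rfl]
  rw [← Stmt14X.isUnit_S_real_iff]
  constructor
  · intro hL
    by_contra hG
    have hdet : (Stmt14X.S ℝ (Stmt14X.Mm A11 A12 A21 A22 B22)).det = 0 := by
      by_contra h0
      exact hG ((Matrix.isUnit_iff_isUnit_det _).2 (isUnit_iff_ne_zero.2 h0))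
    obtain ⟨c, hc, hc0⟩ := Matrix.exists_mulVec_eq_zero_iff.2 hdet
    have hSol := Stmt14X.solF_isSol A11 A12 A21 A22 B22 hAu hBu 0 0 c
    have e0 : (Sum.elim (0 : Fin r → ℝ) (0 : Fin s → ℝ)) = (0 : Fin r ⊕ Fin s → ℝ) := by
      funext i; cases i <;> rfl
    have e1 : (fun i => (0 : Fin s → ℝ) i
        + ((Stmt14X.S ℝ (Stmt14X.Mm A11 A12 A21 A22 B22)) *ᵥ c) i) = (0 : Fin s → ℝ) := by
      funext i; rw [hc0]; simp
    have hSol' := Stmt14X.congr_data hSol e0 e1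
    have hZ := Stmt14X.zero_sol A11 A12 A21 A22 B22
    have hEq := (hL 0 0).2 _ _ hSol' hZ
    apply hc
    set w : ℝ → Fin s → ℝ := fun x => fun i =>
      Stmt14X.solF (A11⁻¹ * A12) (Stmt14X.Mm A11 A12 A21 A22 B22) 0 0 c x (Sum.inr i) with hwdef
    have hw : ∀ y ∈ Set.Icc (0:ℝ) 1, w y = (0 : Fin s → ℝ) := by
      intro y hy; funext i; exact congrFun (hEq hy) (Sum.inr i)
    have hP := Stmt14X.hasDerivAt_Pv (Stmt14X.Mm A11 A12 A21 A22 B22) c 0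
    have hwD : HasDerivAt w c 0 := by
      rw [hasDerivAt_pi]
      intro i
      have h1 := hasDerivAt_pi.1 hP i
      have h2 := (hasDerivAt_const (0:ℝ) (0:ℝ)).add h1
      have h3 : (NormedSpace.exp ((0:ℝ) • Stmt14X.Mm A11 A12 A21 A22 B22) *ᵥ c) = c :=
        Stmt14X.exp_zero_mulVec _ c
      simpa [hwdef, Stmt14X.solF, h3, Pi.add_def] using h2
    have h1' : HasDerivWithinAt w c (Set.Icc 0 1) 0 := hwD.hasDerivWithinAt
    have h2' : HasDerivWithinAt w 0 (Set.Icc 0 1) 0 := by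
      refine (hasDerivWithinAt_const (0:ℝ) _ (0 : Fin s → ℝ)).congr ?_ ?_
      · intro y hy; exact hw y hy
      · exact hw 0 ⟨le_refl 0, zero_le_one⟩
    have hud : UniqueDiffWithinAt ℝ (Set.Icc (0:ℝ) 1) 0 :=
      (uniqueDiffOn_Icc zero_lt_one) 0 ⟨le_refl 0, zero_le_one⟩
    rw [← h1'.derivWithin hud, h2'.derivWithin hud]
  · intro hG U₀ U1II
    have hdetS : IsUnit (Stmt14X.S ℝ (Stmt14X.Mm A11 A12 A21 A22 B22)).det :=
      (Matrix.isUnit_iff_isUnit_det _).1 hG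
    set c : Fin s → ℝ := (Stmt14X.S ℝ (Stmt14X.Mm A11 A12 A21 A22 B22))⁻¹ *ᵥ
      (fun i => U1II i - U₀ (Sum.inr i)) with hcdef
    have hGc : (Stmt14X.S ℝ (Stmt14X.Mm A11 A12 A21 A22 B22)) *ᵥ c
        = fun i => U1II i - U₀ (Sum.inr i) := by
      rw [hcdef, Matrix.mulVec_mulVec, Matrix.mul_nonsing_inv _ hdetS, Matrix.one_mulVec]
    refine ⟨⟨_, Stmt14X.congr_data (Stmt14X.solF_isSol A11 A12 A21 A22 B22 hAu hBu
        (fun i => U₀ (Sum.inl i)) (fun i => U₀ (Sum.inr i)) c) ?_ ?_⟩,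
      fun U V hU hV => Stmt14X.sol_unique A11 A12 A21 A22 B22 hAu hBu hG hU hV⟩
    · funext i; cases i <;> rfl
    · funext i
      rw [congrFun hGc i]
      ring
end
end

section
/- Let k ≥ 1 and let Ã, B̃ ∈ M_k(ℝ) with à symmetric and B̃ + B̃ᵗ positive definite (so B̃ is invertible). Then every complex eigenvalue of B̃⁻¹Ã lying on the imaginary axis is equal to 0; that is, σ(B̃⁻¹Ã) ∩ iℝ ⊆ {0}. -/
open Matrix

noncomputable section

/-- Real part of the complex quadratic form of a real matrix. -/
lemma re_form {k : ℕ} (S : Matrix (Fin k) (Fin k) ℝ) (v : Fin k → ℂ) :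
    (star v ⬝ᵥ (S.map (algebraMap ℝ ℂ)) *ᵥ v).re =
      (fun i => (v i).re) ⬝ᵥ S *ᵥ (fun i => (v i).re) +
      (fun i => (v i).im) ⬝ᵥ S *ᵥ (fun i => (v i).im) := by
  simp only [dotProduct, mulVec, map_apply, Pi.star_apply, Finset.mul_sum, Complex.re_sum,
    ← Finset.sum_add_distrib]
  refine Finset.sum_congr rfl fun i _ => ?_
  refine Finset.sum_congr rfl fun j _ => ?_
  simp only [Complex.mul_re, Complex.mul_im, Complex.star_def, Complex.conj_re, Complex.conj_im,
    Complex.ofReal_re, Complex.ofReal_im, RingHom.coe_coe, Complex.coe_algebraMap]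
  ring

/-- Imaginary part of the complex quadratic form of a real matrix. -/
lemma im_form {k : ℕ} (S : Matrix (Fin k) (Fin k) ℝ) (v : Fin k → ℂ) :
    (star v ⬝ᵥ (S.map (algebraMap ℝ ℂ)) *ᵥ v).im =
      (fun i => (v i).re) ⬝ᵥ S *ᵥ (fun i => (v i).im) -
      (fun i => (v i).im) ⬝ᵥ S *ᵥ (fun i => (v i).re) := by
  simp only [dotProduct, mulVec, map_apply, Pi.star_apply, Finset.mul_sum, Complex.im_sum,
    ← Finset.sum_sub_distrib]
  refine Finset.sum_congr rfl fun i _ => ?_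
  refine Finset.sum_congr rfl fun j _ => ?_
  simp only [Complex.mul_re, Complex.mul_im, Complex.star_def, Complex.conj_re, Complex.conj_im,
    Complex.ofReal_re, Complex.ofReal_im, RingHom.coe_coe, Complex.coe_algebraMap]
  ring

/-- The quadratic form of a transposed real matrix agrees with that of the matrix. -/
lemma form_transpose {k : ℕ} (S : Matrix (Fin k) (Fin k) ℝ) (z : Fin k → ℝ) :
    z ⬝ᵥ Sᵀ *ᵥ z = z ⬝ᵥ S *ᵥ z := by
  rw [dotProduct_mulVec z Sᵀ z, vecMul_transpose, dotProduct_comm]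

lemma form_transpose₂ {k : ℕ} (S : Matrix (Fin k) (Fin k) ℝ) (a b : Fin k → ℝ) :
    a ⬝ᵥ Sᵀ *ᵥ b = b ⬝ᵥ S *ᵥ a := by
  rw [dotProduct_mulVec, vecMul_transpose, dotProduct_comm]

/-- Technical lemma: if `Ã` is symmetric and `B̃ + B̃ᵗ` is positive definite, then every
complex eigenvalue of `B̃⁻¹Ã` on the imaginary axis is zero. -/
theorem stmt15 (k : ℕ) (hk : 1 ≤ k)
    (At Bt : Matrix (Fin k) (Fin k) ℝ)
    (hA : At.IsSymm)
    (hB : (Bt + Btᵀ).PosDef) :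
    ∀ μ ∈ spectrum ℂ ((Bt⁻¹ * At).map (algebraMap ℝ ℂ)), μ.re = 0 → μ = 0 := by
  intro μ hμ hre
  set f := algebraMap ℝ ℂ with hf
  -- positivity of the quadratic form of Bt on reals
  have hBt_pos : ∀ z : Fin k → ℝ, z ≠ 0 → 0 < z ⬝ᵥ Bt *ᵥ z := by
    intro z hz
    have h := hB.dotProduct_mulVec_pos hz
    rw [star_trivial, add_mulVec, dotProduct_add, form_transpose] at h
    linarith
  have hBt_nonneg : ∀ z : Fin k → ℝ, 0 ≤ z ⬝ᵥ Bt *ᵥ z := by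
    intro z
    by_cases hz : z = 0
    · simp [hz]
    · exact le_of_lt (hBt_pos z hz)
  -- Bt is invertible
  have hBunit : IsUnit Bt.det := by
    rw [← Matrix.isUnit_iff_isUnit_det, ← Matrix.mulVec_injective_iff_isUnit]
    intro a b hab
    by_contra hne
    have hz : a - b ≠ 0 := sub_ne_zero.mpr hne
    have h0 : Bt *ᵥ (a - b) = 0 := by
      rw [mulVec_sub, hab, sub_self]
    have := hBt_pos (a - b) hz
    rw [h0] at this
    simp at this
  -- get an eigenvector over ℂ
  set M := ((Bt⁻¹ * At).map f) with hM
  have hμ' : Module.End.HasEigenvalue (Matrix.toLin' M) μ := by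
    rw [Module.End.hasEigenvalue_iff_mem_spectrum]
    have : Matrix.toLin' M = Matrix.toLinAlgEquiv' M := rfl
    rw [this, AlgEquiv.spectrum_eq]
    exact hμ
  obtain ⟨v, hv⟩ := hμ'.exists_hasEigenvector
  have hv0 : v ≠ 0 := hv.right
  have hvM : M *ᵥ v = μ • v := by
    have := hv.apply_eq_smul
    rwa [Matrix.toLin'_apply] at this
  -- key identity: (At.map f) *ᵥ v = μ • ((Bt.map f) *ᵥ v)
  have key : (At.map f) *ᵥ v = μ • ((Bt.map f) *ᵥ v) := by
    have h1 : (Bt.map f) * M = At.map f := by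
      rw [hM, ← Matrix.map_mul, ← mul_assoc, Matrix.mul_nonsing_inv Bt hBunit, one_mul]
    calc (At.map f) *ᵥ v = ((Bt.map f) * M) *ᵥ v := by rw [h1]
      _ = (Bt.map f) *ᵥ (M *ᵥ v) := by rw [mulVec_mulVec]
      _ = (Bt.map f) *ᵥ (μ • v) := by rw [hvM]
      _ = μ • ((Bt.map f) *ᵥ v) := by rw [mulVec_smul]
  set c : ℂ := star v ⬝ᵥ ((Bt.map f) *ᵥ v) with hc
  have hr : star v ⬝ᵥ ((At.map f) *ᵥ v) = μ * c := by
    rw [key, dotProduct_smul, smul_eq_mul]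
  set x : Fin k → ℝ := fun i => (v i).re with hx
  set y : Fin k → ℝ := fun i => (v i).im with hy
  -- the A-form is real
  have himA : (star v ⬝ᵥ ((At.map f) *ᵥ v)).im = 0 := by
    rw [im_form]
    have : x ⬝ᵥ At *ᵥ y = y ⬝ᵥ At *ᵥ x := by
      conv_lhs => rw [← hA.eq]
      rw [form_transpose₂]
    rw [this, sub_self]
  -- Re c > 0
  have hxy : x ≠ 0 ∨ y ≠ 0 := by
    by_contra h
    push_neg at h
    apply hv0
    funext i
    have h1 : x i = 0 := by rw [h.1]; rfl
    have h2 : y i = 0 := by rw [h.2]; rfl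
    exact Complex.ext h1 h2
  have hcre : 0 < c.re := by
    rw [hc, re_form]
    rcases hxy with hx0 | hy0
    · exact add_pos_of_pos_of_nonneg (hBt_pos x hx0) (hBt_nonneg y)
    · exact add_pos_of_nonneg_of_pos (hBt_nonneg x) (hBt_pos y hy0)
  -- conclude
  have him : (μ * c).im = 0 := by rw [← hr]; exact himA
  rw [Complex.mul_im, hre, zero_mul, zero_add] at him
  have hμim : μ.im = 0 := by
    rcases mul_eq_zero.mp him with h | h
    · exact h
    · exact absurd h (ne_of_gt hcre)
  exact Complex.ext hre hμim
end
end

section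
/- Let n > r ≥ 1, let A = [[A₁₁, A₁₂],[A₂₁, A₂₂]] ∈ Mₙ(ℝ) with A₁₁ ∈ M_r(ℝ) invertible, and let B₂₂ ∈ M_{n−r}(ℝ) be invertible. Suppose there exists a block-diagonal symmetrizer S = diag(S₁₁, S₂₂) ∈ Mₙ(ℝ) which is symmetric positive definite, such that SA is symmetric and S₂₂B₂₂ + (S₂₂B₂₂)ᵗ is positive definite. Then every complex eigenvalue of B₂₂⁻¹(A₂₂ − A₂₁ A₁₁⁻¹ A₁₂) lying on the imaginary axis is equal to 0. -/
/-! If `B₂₂⁻¹ M v = μ v` for the Schur complement `M = A₂₂ - A₂₁ A₁₁⁻¹ A₁₂`, then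
`S₂₂ M v = μ S₂₂ B₂₂ v`. The matrix `S₂₂ M` is symmetric, because `S₂₂ A₂₁ A₁₁⁻¹ A₁₂` is the
congruence `Xᵀ (S₁₁ A₁₁) X` with `X = A₁₁⁻¹ A₁₂`; hence `v* S₂₂ M v = μ (v* S₂₂ B₂₂ v)` is real.
For imaginary `μ` its imaginary part is `Im μ · Re (v* S₂₂ B₂₂ v)`, and this real part is positive
since the symmetric part of `S₂₂ B₂₂` is positive definite. So `Im μ = 0`. -/

open Matrix

namespace Matrix

variable {m n : Type*} [Fintype n]

theorem isSymm_mul_schurComplement [Fintype m] [DecidableEq m] {R : Type*} [CommRing R]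
    {A₁₁ S₁₁ : Matrix m m R} {A₁₂ : Matrix m n R} {A₂₁ : Matrix n m R} {A₂₂ S₂₂ : Matrix n n R}
    (hA₁₁ : IsUnit A₁₁.det)
    (hSA : (fromBlocks S₁₁ 0 0 S₂₂ * fromBlocks A₁₁ A₁₂ A₂₁ A₂₂).IsSymm) :
    (S₂₂ * (A₂₂ - A₂₁ * A₁₁⁻¹ * A₁₂)).IsSymm := by
  simp only [fromBlocks_multiply, Matrix.zero_mul, add_zero, zero_add] at hSA
  obtain ⟨h₁₁, h₁₂, -, h₂₂⟩ := isSymm_fromBlocks_iff.mp hSA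
  set X := A₁₁⁻¹ * A₁₂
  have hA₁₂ : A₁₁ * X = A₁₂ := by rw [← Matrix.mul_assoc, mul_nonsing_inv _ hA₁₁, Matrix.one_mul]
  have hcongr : S₂₂ * (A₂₁ * A₁₁⁻¹ * A₁₂) = Xᵀ * (S₁₁ * A₁₁) * X := calc
    S₂₂ * (A₂₁ * A₁₁⁻¹ * A₁₂) = (S₂₂ * A₂₁) * X := by simp only [X, Matrix.mul_assoc]
    _ = (S₁₁ * A₁₁ * X)ᵀ * X := by rw [← h₁₂, ← hA₁₂, Matrix.mul_assoc]
    _ = Xᵀ * (S₁₁ * A₁₁) * X := by rw [transpose_mul, h₁₁.eq]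
  rw [Matrix.mul_sub, hcongr]
  refine h₂₂.sub ?_
  clear_value X
  rw [IsSymm, transpose_mul, transpose_mul, transpose_transpose, h₁₁.eq, ← Matrix.mul_assoc]

theorem re_star_dotProduct_map_ofReal_mulVec (P : Matrix n n ℝ) (v : n → ℂ) :
    (star v ⬝ᵥ P.map (algebraMap ℝ ℂ) *ᵥ v).re =
      (fun i ↦ (v i).re) ⬝ᵥ P *ᵥ (fun i ↦ (v i).re) +
        (fun i ↦ (v i).im) ⬝ᵥ P *ᵥ (fun i ↦ (v i).im) := by
  simp only [dotProduct, mulVec, Pi.star_apply, map_apply, Complex.re_sum, Finset.mul_sum,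
    ← Finset.sum_add_distrib]
  refine Finset.sum_congr rfl fun i _ ↦ Finset.sum_congr rfl fun j _ ↦ ?_
  simp only [Complex.star_def, Complex.mul_re, Complex.conj_re, Complex.conj_im, Complex.mul_im,
    Complex.coe_algebraMap, Complex.ofReal_re, Complex.ofReal_im]
  ring

theorem im_star_dotProduct_map_ofReal_mulVec (P : Matrix n n ℝ) (v : n → ℂ) :
    (star v ⬝ᵥ P.map (algebraMap ℝ ℂ) *ᵥ v).im =
      (fun i ↦ (v i).re) ⬝ᵥ P *ᵥ (fun i ↦ (v i).im) -
        (fun i ↦ (v i).im) ⬝ᵥ P *ᵥ (fun i ↦ (v i).re) := by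
  simp only [dotProduct, mulVec, Pi.star_apply, map_apply, Complex.im_sum, Finset.mul_sum,
    ← Finset.sum_sub_distrib]
  refine Finset.sum_congr rfl fun i _ ↦ Finset.sum_congr rfl fun j _ ↦ ?_
  simp only [Complex.star_def, Complex.mul_re, Complex.conj_re, Complex.conj_im, Complex.mul_im,
    Complex.coe_algebraMap, Complex.ofReal_re, Complex.ofReal_im]
  ring

theorem IsSymm.im_star_dotProduct_map_ofReal_mulVec {K : Matrix n n ℝ} (hK : K.IsSymm)
    (v : n → ℂ) : (star v ⬝ᵥ K.map (algebraMap ℝ ℂ) *ᵥ v).im = 0 := by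
  rw [Matrix.im_star_dotProduct_map_ofReal_mulVec, dotProduct_mulVec, ← mulVec_transpose, hK.eq,
    dotProduct_comm, sub_self]

theorem dotProduct_mulVec_pos_of_posDef_add_transpose {W : Matrix n n ℝ} (hW : (W + Wᵀ).PosDef)
    {x : n → ℝ} (hx : x ≠ 0) : 0 < x ⬝ᵥ W *ᵥ x := by
  have h := hW.dotProduct_mulVec_pos hx
  rwa [star_trivial, add_mulVec, dotProduct_add, dotProduct_mulVec x Wᵀ, vecMul_transpose,
    dotProduct_comm (W *ᵥ x), ← two_mul, mul_pos_iff_of_pos_left two_pos] at h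

theorem re_star_dotProduct_map_ofReal_mulVec_pos {W : Matrix n n ℝ} (hW : (W + Wᵀ).PosDef)
    {v : n → ℂ} (hv : v ≠ 0) : 0 < (star v ⬝ᵥ W.map (algebraMap ℝ ℂ) *ᵥ v).re := by
  have hpos {x : n → ℝ} (hx : x ≠ 0) := dotProduct_mulVec_pos_of_posDef_add_transpose hW hx
  have hnonneg (x : n → ℝ) : 0 ≤ x ⬝ᵥ W *ᵥ x := by
    rcases eq_or_ne x 0 with rfl | hx
    · simp
    · exact (hpos hx).le
  rw [re_star_dotProduct_map_ofReal_mulVec]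
  by_cases hre : (fun i ↦ (v i).re) = 0
  · have him : (fun i ↦ (v i).im) ≠ 0 := fun him ↦
      hv (funext fun i ↦ Complex.ext (congrFun hre i) (congrFun him i))
    exact add_pos_of_nonneg_of_pos (hnonneg _) (hpos him)
  · exact add_pos_of_pos_of_nonneg (hpos hre) (hnonneg _)

theorem eq_zero_of_mulVec_eq_smul_mulVec {K W : Matrix n n ℝ} (hK : K.IsSymm)
    (hW : (W + Wᵀ).PosDef) {μ : ℂ} (hμ : μ.re = 0) {v : n → ℂ} (hv : v ≠ 0)
    (h : K.map (algebraMap ℝ ℂ) *ᵥ v = μ • (W.map (algebraMap ℝ ℂ) *ᵥ v)) : μ = 0 := by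
  have him : μ.im * (star v ⬝ᵥ W.map (algebraMap ℝ ℂ) *ᵥ v).re = 0 := by
    have := hK.im_star_dotProduct_map_ofReal_mulVec v
    rwa [h, dotProduct_smul, smul_eq_mul, Complex.mul_im, hμ, zero_mul, zero_add] at this
  exact Complex.ext hμ <|
    (mul_eq_zero.mp him).resolve_right (re_star_dotProduct_map_ofReal_mulVec_pos hW hv).ne'

theorem exists_mulVec_eq_smul_of_mem_spectrum [DecidableEq n] {K : Type*} [Field K]
    {M : Matrix n n K} {μ : K} (hμ : μ ∈ spectrum K M) : ∃ v ≠ 0, M *ᵥ v = μ • v := by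
  rw [← spectrum_toLin', ← Module.End.hasEigenvalue_iff_mem_spectrum] at hμ
  obtain ⟨v, hv⟩ := hμ.exists_hasEigenvector
  exact ⟨v, hv.2, by simpa using Module.End.mem_eigenspace_iff.mp hv.1⟩

theorem map_mul_mulVec_eq_smul_of_map_inv_mul_mulVec_eq_smul [DecidableEq n] {R L : Type*}
    [CommRing R] [CommRing L] (f : R →+* L) (S : Matrix m n R) {B M : Matrix n n R}
    (hB : IsUnit B.det) {μ : L} {v : n → L} (h : (B⁻¹ * M).map f *ᵥ v = μ • v) :
    (S * M).map f *ᵥ v = μ • ((S * B).map f *ᵥ v) := calc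
  (S * M).map f *ᵥ v = (S * B).map f *ᵥ ((B⁻¹ * M).map f *ᵥ v) := by
    rw [mulVec_mulVec, ← Matrix.map_mul, Matrix.mul_assoc, ← Matrix.mul_assoc B,
      mul_nonsing_inv _ hB, Matrix.one_mul]
  _ = μ • ((S * B).map f *ᵥ v) := by rw [h, mulVec_smul]

end Matrix

theorem stmt16_general (r s : ℕ)
    (A11 : Matrix (Fin r) (Fin r) ℝ) (A12 : Matrix (Fin r) (Fin s) ℝ)
    (A21 : Matrix (Fin s) (Fin r) ℝ) (A22 B22 : Matrix (Fin s) (Fin s) ℝ)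
    (hA11inv : IsUnit A11.det) (hB22inv : IsUnit B22.det)
    (S11 : Matrix (Fin r) (Fin r) ℝ) (S22 : Matrix (Fin s) (Fin s) ℝ)
    (hSA : ((Matrix.fromBlocks S11 0 0 S22) * (Matrix.fromBlocks A11 A12 A21 A22)).IsSymm)
    (hSB : (S22 * B22 + (S22 * B22)ᵀ).PosDef) :
    ∀ μ ∈ spectrum ℂ ((B22⁻¹ * (A22 - A21 * A11⁻¹ * A12)).map (algebraMap ℝ ℂ)),
      μ.re = 0 → μ = 0 := by
  intro μ hμ hre
  obtain ⟨v, hv, hμv⟩ := exists_mulVec_eq_smul_of_mem_spectrum hμ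
  exact eq_zero_of_mulVec_eq_smul_mulVec (isSymm_mul_schurComplement hA11inv hSA) hSB hre hv
    (map_mul_mulVec_eq_smul_of_map_inv_mul_mulVec_eq_smul _ S22 hB22inv hμv)

/-- Lemma (symlem): under the symmetrizability assumption (H3), every complex eigenvalue of
`B₂₂⁻¹(A₂₂ − A₂₁A₁₁⁻¹A₁₂)` lying on the imaginary axis is zero. -/
theorem stmt16 (r s : ℕ) (hr : 1 ≤ r) (hs : 1 ≤ s)
    (A11 : Matrix (Fin r) (Fin r) ℝ) (A12 : Matrix (Fin r) (Fin s) ℝ)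
    (A21 : Matrix (Fin s) (Fin r) ℝ) (A22 B22 : Matrix (Fin s) (Fin s) ℝ)
    (hA11inv : IsUnit A11.det) (hB22inv : IsUnit B22.det)
    (S11 : Matrix (Fin r) (Fin r) ℝ) (S22 : Matrix (Fin s) (Fin s) ℝ)
    (hS : (Matrix.fromBlocks S11 0 0 S22).PosDef)
    (hSA : ((Matrix.fromBlocks S11 0 0 S22) * (Matrix.fromBlocks A11 A12 A21 A22)).IsSymm)
    (hSB : (S22 * B22 + (S22 * B22)ᵀ).PosDef) :
    ∀ μ ∈ spectrum ℂ ((B22⁻¹ * (A22 - A21 * A11⁻¹ * A12)).map (algebraMap ℝ ℂ)),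
      μ.re = 0 → μ = 0 :=
  stmt16_general r s A11 A12 A21 A22 B22 hA11inv hB22inv S11 S22 hSA hSB
end

section
/- Let n > r ≥ 1, let A = [[A₁₁, A₁₂],[A₂₁, A₂₂]] ∈ Mₙ(ℝ) with A₁₁ ∈ M_r(ℝ), and B = [[0,0],[0,B₂₂]] ∈ Mₙ(ℝ). Suppose S = diag(S₁₁, S₂₂) ∈ Mₙ(ℝ) is symmetric positive definite, SA is symmetric, S₂₂B₂₂ + (S₂₂B₂₂)ᵗ is positive definite, and S₁₁A₁₁ is symmetric positive definite. Let λ ∈ ℂ with Re λ ≥ 0 and let V = (V_I, V_{II}) : [0,1] → ℂⁿ be twice continuously differentiable solving the eigenvalue problem λV + A V′ = B V″ on [0,1] with boundary conditions V(0) = 0 and V_{II}(1) = 0. Then V ≡ 0. In other words, the constant steady state of the linear symmetrizable system is spectrally stable: the linearized operator has no eigenvalue with nonnegative real part. -/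
open Matrix

noncomputable section

namespace Stmt17Aux

lemma re_hasDerivAt {f : ℝ → ℂ} {f' : ℂ} {x : ℝ} (h : HasDerivAt f f' x) :
    HasDerivAt (fun t => (f t).re) f'.re x :=
  Complex.reCLM.hasFDerivAt.comp_hasDerivAt x h

lemma im_hasDerivAt {f : ℝ → ℂ} {f' : ℂ} {x : ℝ} (h : HasDerivAt f f' x) :
    HasDerivAt (fun t => (f t).im) f'.im x :=
  Complex.imCLM.hasFDerivAt.comp_hasDerivAt x h

variable {n : Type*} [Fintype n]

lemma quad_expand (M : Matrix n n ℂ) (u w : n → ℂ) :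
    (star u ⬝ᵥ M.mulVec w).re
      = ∑ i, ∑ j, ((u i).re * (M i j * w j).re + (u i).im * (M i j * w j).im) := by
  simp only [dotProduct, mulVec, Pi.star_apply, Finset.mul_sum, Complex.re_sum]
  refine Finset.sum_congr rfl fun i _ => Finset.sum_congr rfl fun j _ => ?_
  simp only [Complex.mul_re, Complex.star_def, Complex.conj_re, Complex.conj_im]
  ring

lemma hasDerivAt_quadform (M : Matrix n n ℂ) (f g : ℝ → n → ℂ) (f₁ g₁ : n → ℂ) (x : ℝ)
    (hf : HasDerivAt f f₁ x) (hg : HasDerivAt g g₁ x) :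
    HasDerivAt (fun t => (star (f t) ⬝ᵥ M.mulVec (g t)).re)
      ((star f₁ ⬝ᵥ M.mulVec (g x)).re + (star (f x) ⬝ᵥ M.mulVec g₁).re) x := by
  have hfc := hasDerivAt_pi.1 hf
  have hgc := hasDerivAt_pi.1 hg
  have main : HasDerivAt
      (fun t => ∑ i, ∑ j, ((f t i).re * (M i j * g t j).re + (f t i).im * (M i j * g t j).im))
      (∑ i, ∑ j, (((f₁ i).re * (M i j * g x j).re + (f x i).re * (M i j * g₁ j).re)
        + ((f₁ i).im * (M i j * g x j).im + (f x i).im * (M i j * g₁ j).im))) x := by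
    apply HasDerivAt.fun_sum; intro i _
    apply HasDerivAt.fun_sum; intro j _
    have ha := hfc i
    have hb : HasDerivAt (fun t => M i j * g t j) (M i j * g₁ j) x := (hgc j).const_mul _
    exact ((re_hasDerivAt ha).mul (re_hasDerivAt hb)).add
      ((im_hasDerivAt ha).mul (im_hasDerivAt hb))
  have hfun : (fun t => (star (f t) ⬝ᵥ M.mulVec (g t)).re)
      = fun t => ∑ i, ∑ j, ((f t i).re * (M i j * g t j).re + (f t i).im * (M i j * g t j).im) :=
    funext fun t => quad_expand M (f t) (g t)
  have hval : (star f₁ ⬝ᵥ M.mulVec (g x)).re + (star (f x) ⬝ᵥ M.mulVec g₁).re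
      = ∑ i, ∑ j, (((f₁ i).re * (M i j * g x j).re + (f x i).re * (M i j * g₁ j).re)
        + ((f₁ i).im * (M i j * g x j).im + (f x i).im * (M i j * g₁ j).im)) := by
    rw [quad_expand, quad_expand, ← Finset.sum_add_distrib]
    refine Finset.sum_congr rfl fun i _ => ?_
    rw [← Finset.sum_add_distrib]
    exact Finset.sum_congr rfl fun j _ => by ring
  rw [hfun, hval] at *
  exact main

lemma dot_conj (M : Matrix n n ℝ) (u w : n → ℂ) :
    (starRingEnd ℂ) (star u ⬝ᵥ (M.map (algebraMap ℝ ℂ)).mulVec w)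
      = star w ⬝ᵥ (Mᵀ.map (algebraMap ℝ ℂ)).mulVec u := by
  simp only [dotProduct, mulVec, Pi.star_apply, Finset.mul_sum, map_sum,
    Complex.star_def, Matrix.map_apply, Matrix.transpose_apply,
    Complex.coe_algebraMap]
  rw [Finset.sum_comm]
  refine Finset.sum_congr rfl fun j _ => Finset.sum_congr rfl fun i _ => ?_
  simp only [_root_.map_mul, Complex.conj_conj, Complex.conj_ofReal]
  ring

lemma re_dot_symm (M : Matrix n n ℝ) (u w : n → ℂ) :
    (star u ⬝ᵥ (M.map (algebraMap ℝ ℂ)).mulVec w).re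
      = (star w ⬝ᵥ (Mᵀ.map (algebraMap ℝ ℂ)).mulVec u).re := by
  rw [← dot_conj, Complex.conj_re]

lemma quad_im (M : Matrix n n ℝ) (hM : M.IsSymm) (w : n → ℂ) :
    (star w ⬝ᵥ (M.map (algebraMap ℝ ℂ)).mulVec w).im = 0 := by
  have h := dot_conj M w w
  rw [hM.eq] at h
  have := congrArg Complex.im h
  rw [Complex.conj_im] at this
  linarith

lemma quad_decomp (M : Matrix n n ℝ) (w : n → ℂ) :
    (star w ⬝ᵥ (M.map (algebraMap ℝ ℂ)).mulVec w).re
      = (fun i => (w i).re) ⬝ᵥ M.mulVec (fun i => (w i).re)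
        + (fun i => (w i).im) ⬝ᵥ M.mulVec (fun i => (w i).im) := by
  rw [quad_expand]
  simp only [dotProduct, mulVec, Finset.mul_sum, ← Finset.sum_add_distrib]
  refine Finset.sum_congr rfl fun i _ => Finset.sum_congr rfl fun j _ => ?_
  simp only [Matrix.map_apply, Complex.mul_re, Complex.mul_im, Complex.ofReal_re,
    Complex.ofReal_im, Complex.coe_algebraMap]
  ring

lemma quad_re_nonneg (M : Matrix n n ℝ) (hM : M.PosSemidef) (w : n → ℂ) :
    0 ≤ (star w ⬝ᵥ (M.map (algebraMap ℝ ℂ)).mulVec w).re := by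
  rw [quad_decomp]
  have h1 := hM.dotProduct_mulVec_nonneg (fun i => (w i).re)
  have h2 := hM.dotProduct_mulVec_nonneg (fun i => (w i).im)
  simp only [star_trivial] at h1 h2
  linarith

lemma quad_re_eq_zero (M : Matrix n n ℝ) (hM : M.PosDef) (w : n → ℂ)
    (h : (star w ⬝ᵥ (M.map (algebraMap ℝ ℂ)).mulVec w).re = 0) : w = 0 := by
  rw [quad_decomp] at h
  by_contra hw
  have hre := hM.posSemidef.dotProduct_mulVec_nonneg (fun i => (w i).re)
  have him := hM.posSemidef.dotProduct_mulVec_nonneg (fun i => (w i).im)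
  simp only [star_trivial] at hre him
  have : (fun i => (w i).re) ≠ 0 ∨ (fun i => (w i).im) ≠ 0 := by
    by_contra hc
    push_neg at hc
    apply hw
    funext i
    have h1 := congrFun hc.1 i
    have h2 := congrFun hc.2 i
    simp only [Pi.zero_apply] at h1 h2
    exact Complex.ext h1 h2
  rcases this with hne | hne
  · have := hM.dotProduct_mulVec_pos hne
    simp only [star_trivial] at this
    linarith
  · have := hM.dotProduct_mulVec_pos hne
    simp only [star_trivial] at this
    linarith

lemma mono_aux {f g : ℝ → ℝ} (hd : ∀ x ∈ Set.Icc (0:ℝ) 1, HasDerivAt f (g x) x)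
    (h0 : ∀ x ∈ Set.Ioo (0:ℝ) 1, 0 ≤ g x) : MonotoneOn f (Set.Icc 0 1) := by
  apply monotoneOn_of_deriv_nonneg (convex_Icc 0 1)
  · exact fun x hx => (hd x hx).continuousAt.continuousWithinAt
  · rw [interior_Icc]
    exact fun x hx =>
      (hd x (Set.Ioo_subset_Icc_self hx)).differentiableAt.differentiableWithinAt
  · rw [interior_Icc]
    intro x hx
    rw [(hd x (Set.Ioo_subset_Icc_self hx)).deriv]
    exact h0 x hx

lemma anti_aux {f g : ℝ → ℝ} (hd : ∀ x ∈ Set.Icc (0:ℝ) 1, HasDerivAt f (g x) x)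
    (h0 : ∀ x ∈ Set.Ioo (0:ℝ) 1, g x ≤ 0) : AntitoneOn f (Set.Icc 0 1) := by
  have := mono_aux (f := fun x => -f x) (g := fun x => -g x)
    (fun x hx => (hd x hx).neg) (fun x hx => neg_nonneg.2 (h0 x hx))
  intro a ha b hb hab
  have h2 : -f a ≤ -f b := this ha hb hab
  linarith

lemma const_aux {f g : ℝ → ℝ} (hd : ∀ x ∈ Set.Icc (0:ℝ) 1, HasDerivAt f (g x) x)
    (h0 : ∀ x ∈ Set.Ioo (0:ℝ) 1, g x = 0) : ∀ x ∈ Set.Icc (0:ℝ) 1, f x = f 1 := by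
  intro x hx
  have h1 : (1:ℝ) ∈ Set.Icc (0:ℝ) 1 := by constructor <;> norm_num
  have hm := mono_aux hd (fun y hy => (h0 y hy).ge) hx h1 hx.2
  have ha := anti_aux hd (fun y hy => (h0 y hy).le) hx h1 hx.2
  linarith

lemma dot_lowerright {p q : Type*} [Fintype p] [Fintype q]
    (M : Matrix q q ℂ) (u w : p ⊕ q → ℂ) :
    star u ⬝ᵥ (Matrix.fromBlocks 0 0 0 M).mulVec w
      = star (u ∘ Sum.inr) ⬝ᵥ M.mulVec (w ∘ Sum.inr) := by
  rw [Matrix.fromBlocks_mulVec]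
  simp [dotProduct, Fintype.sum_sum_type]

lemma dot_left0 {p q : Type*} [Fintype p] [Fintype q]
    (P : Matrix p p ℂ) (R : Matrix q p ℂ) (T : Matrix q q ℂ) (u w : p ⊕ q → ℂ)
    (hw : ∀ j, w (Sum.inr j) = 0) :
    star w ⬝ᵥ (Matrix.fromBlocks P 0 R T).mulVec u
      = star (w ∘ Sum.inl) ⬝ᵥ P.mulVec (u ∘ Sum.inl) := by
  rw [Matrix.fromBlocks_mulVec]
  simp [dotProduct, Fintype.sum_sum_type, hw]

lemma dot_both0 {p q : Type*} [Fintype p] [Fintype q]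
    (P : Matrix p p ℂ) (Q : Matrix p q ℂ) (R : Matrix q p ℂ) (T : Matrix q q ℂ)
    (u w : p ⊕ q → ℂ) (hw : ∀ j, w (Sum.inr j) = 0) (hu : ∀ j, u (Sum.inr j) = 0) :
    star w ⬝ᵥ (Matrix.fromBlocks P Q R T).mulVec u
      = star (w ∘ Sum.inl) ⬝ᵥ P.mulVec (u ∘ Sum.inl) := by
  have hu' : u ∘ Sum.inr = 0 := funext hu
  rw [Matrix.fromBlocks_mulVec, hu']
  simp [dotProduct, Fintype.sum_sum_type, hw]

end Stmt17Aux

end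

noncomputable section

open Stmt17Aux

/-- Spectral stability of the constant steady state of a linear symmetrizable system:
the eigenvalue problem `λV + AV′ = BV″` on `[0,1]` with `V(0) = 0`, `V_{II}(1) = 0` has no
nontrivial solution for `Re λ ≥ 0`. -/
theorem stmt17 (r s : ℕ) (hr : 1 ≤ r) (hs : 1 ≤ s)
    (A11 : Matrix (Fin r) (Fin r) ℝ) (A12 : Matrix (Fin r) (Fin s) ℝ)
    (A21 : Matrix (Fin s) (Fin r) ℝ) (A22 B22 : Matrix (Fin s) (Fin s) ℝ)
    (S11 : Matrix (Fin r) (Fin r) ℝ) (S22 : Matrix (Fin s) (Fin s) ℝ)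
    (hS : (Matrix.fromBlocks S11 0 0 S22).PosDef)
    (hSA : ((Matrix.fromBlocks S11 0 0 S22) * (Matrix.fromBlocks A11 A12 A21 A22)).IsSymm)
    (hSB : (S22 * B22 + (S22 * B22)ᵀ).PosDef)
    (hSA11 : (S11 * A11).PosDef)
    (lam : ℂ) (hlam : 0 ≤ lam.re)
    (V V' V'' : ℝ → Fin r ⊕ Fin s → ℂ)
    (hV : ∀ x ∈ Set.Icc (0:ℝ) 1, HasDerivAt V (V' x) x ∧ HasDerivAt V' (V'' x) x)
    (hV'' : ContinuousOn V'' (Set.Icc 0 1))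
    (heq : ∀ x ∈ Set.Icc (0:ℝ) 1,
      lam • V x
        + ((Matrix.fromBlocks A11 A12 A21 A22).map (algebraMap ℝ ℂ)).mulVec (V' x)
      = ((Matrix.fromBlocks (0 : Matrix (Fin r) (Fin r) ℝ) 0 0 B22).map
          (algebraMap ℝ ℂ)).mulVec (V'' x))
    (hbc0 : V 0 = 0) (hbc1 : ∀ i, V 1 (Sum.inr i) = 0) :
    ∀ x ∈ Set.Icc (0:ℝ) 1, V x = 0 := by
  classical
  set Smat := Matrix.fromBlocks S11 0 0 S22 with hSmatdef
  set Amat := Matrix.fromBlocks A11 A12 A21 A22 with hAmatdef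
  set Bmat := Matrix.fromBlocks (0 : Matrix (Fin r) (Fin r) ℝ) 0 0 B22 with hBmatdef
  have hmem0 : (0:ℝ) ∈ Set.Icc (0:ℝ) 1 := ⟨le_refl 0, by norm_num⟩
  have hmem1 : (1:ℝ) ∈ Set.Icc (0:ℝ) 1 := ⟨by norm_num, le_refl 1⟩
  -- block computations
  have hSBblk : Smat * Bmat = Matrix.fromBlocks 0 0 0 (S22 * B22) := by
    rw [hSmatdef, hBmatdef, Matrix.fromBlocks_multiply]; simp
  have hSAblk : Smat * Amat
      = Matrix.fromBlocks (S11 * A11) (S11 * A12) (S22 * A21) (S22 * A22) := by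
    rw [hSmatdef, hAmatdef, Matrix.fromBlocks_multiply]; simp
  have hSsymm : Smat.IsSymm := by
    show Smatᵀ = Smat
    rw [← Matrix.conjTranspose_eq_transpose_of_trivial]
    exact hS.1
  set SAc := (Smat * Amat).map (algebraMap ℝ ℂ) with hSAcdef
  set SBc := (Smat * Bmat).map (algebraMap ℝ ℂ) with hSBcdef
  set Sc := Smat.map (algebraMap ℝ ℂ) with hScdef
  have hSBcblk : SBc = Matrix.fromBlocks 0 0 0 ((S22 * B22).map (algebraMap ℝ ℂ)) := by
    rw [hSBcdef, hSBblk, Matrix.fromBlocks_map]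
    simp
  have hSAcblk : SAc = Matrix.fromBlocks ((S11 * A11).map (algebraMap ℝ ℂ))
      ((S11 * A12).map (algebraMap ℝ ℂ)) ((S22 * A21).map (algebraMap ℝ ℂ))
      ((S22 * A22).map (algebraMap ℝ ℂ)) := by
    rw [hSAcdef, hSAblk, Matrix.fromBlocks_map]
  have hScblk : Sc = Matrix.fromBlocks (S11.map (algebraMap ℝ ℂ)) 0 0
      (S22.map (algebraMap ℝ ℂ)) := by
    rw [hScdef, hSmatdef, Matrix.fromBlocks_map]
    simp
  -- basic quadratic-form facts
  have hqim : ∀ w : Fin r ⊕ Fin s → ℂ, (star w ⬝ᵥ Sc.mulVec w).im = 0 :=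
    fun w => quad_im Smat hSsymm w
  have hq0 : ∀ w : Fin r ⊕ Fin s → ℂ, 0 ≤ (star w ⬝ᵥ Sc.mulVec w).re :=
    fun w => quad_re_nonneg Smat hS.posSemidef w
  have hswap : ∀ u w : Fin r ⊕ Fin s → ℂ,
      (star u ⬝ᵥ SAc.mulVec w).re = (star w ⬝ᵥ SAc.mulVec u).re := by
    intro u w
    rw [hSAcdef, re_dot_symm (Smat * Amat) u w, hSA.eq]
  have ht1 : ∀ w : Fin r ⊕ Fin s → ℂ,
      (star w ⬝ᵥ SBc.mulVec w).re
        = (star (w ∘ Sum.inr) ⬝ᵥ (((S22 * B22) + (S22 * B22)ᵀ).map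
            (algebraMap ℝ ℂ)).mulVec (w ∘ Sum.inr)).re / 2 := by
    intro w
    rw [hSBcblk, dot_lowerright]
    have h2 := re_dot_symm (S22 * B22) (w ∘ Sum.inr) (w ∘ Sum.inr)
    have h3 : (((S22 * B22) + (S22 * B22)ᵀ).map (algebraMap ℝ ℂ))
        = (S22 * B22).map (algebraMap ℝ ℂ) + ((S22 * B22)ᵀ).map (algebraMap ℝ ℂ) :=
      Matrix.map_add _ (fun a b => by simp) _ _
    rw [h3, Matrix.add_mulVec, dotProduct_add, Complex.add_re, ← h2]
    ring
  have ht1nonneg : ∀ w : Fin r ⊕ Fin s → ℂ, 0 ≤ (star w ⬝ᵥ SBc.mulVec w).re := by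
    intro w
    rw [ht1 w]
    have := quad_re_nonneg _ hSB.posSemidef (w ∘ Sum.inr)
    linarith
  have ht1zero : ∀ w : Fin r ⊕ Fin s → ℂ, (star w ⬝ᵥ SBc.mulVec w).re = 0 →
      ∀ i, w (Sum.inr i) = 0 := by
    intro w hw i
    rw [ht1 w] at hw
    have hq : (star (w ∘ Sum.inr) ⬝ᵥ (((S22 * B22) + (S22 * B22)ᵀ).map
        (algebraMap ℝ ℂ)).mulVec (w ∘ Sum.inr)).re = 0 := by linarith
    have := quad_re_eq_zero _ hSB _ hq
    exact congrFun this i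
  -- the multiplied equation
  have heqS : ∀ x ∈ Set.Icc (0:ℝ) 1,
      SBc.mulVec (V'' x) = lam • Sc.mulVec (V x) + SAc.mulVec (V' x) := by
    intro x hx
    have h := congrArg (fun v => Sc.mulVec v) (heq x hx)
    simp only [Matrix.mulVec_add, Matrix.mulVec_smul, Matrix.mulVec_mulVec] at h
    rw [hScdef] at h
    simp only [← Matrix.map_mul] at h
    rw [← hSAcdef, ← hSBcdef, ← hScdef] at h
    exact h.symm
  -- energy function H
  set H : ℝ → ℝ := fun x => (star (V x) ⬝ᵥ SBc.mulVec (V' x)).re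
      - (star (V x) ⬝ᵥ SAc.mulVec (V x)).re / 2 with hHdef
  set G : ℝ → ℝ := fun x => (star (V' x) ⬝ᵥ SBc.mulVec (V' x)).re
      + lam.re * (star (V x) ⬝ᵥ Sc.mulVec (V x)).re with hGdef
  have heq1 : ∀ x ∈ Set.Icc (0:ℝ) 1,
      (star (V x) ⬝ᵥ SBc.mulVec (V'' x)).re
        = lam.re * (star (V x) ⬝ᵥ Sc.mulVec (V x)).re
          + (star (V x) ⬝ᵥ SAc.mulVec (V' x)).re := by
    intro x hx
    rw [heqS x hx, dotProduct_add, dotProduct_smul, Complex.add_re, smul_eq_mul,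
      Complex.mul_re, hqim, mul_zero, sub_zero]
  have hHd : ∀ x ∈ Set.Icc (0:ℝ) 1, HasDerivAt H (G x) x := by
    intro x hx
    have h1 := hasDerivAt_quadform SBc V V' (V' x) (V'' x) x (hV x hx).1 (hV x hx).2
    have h2 := hasDerivAt_quadform SAc V V (V' x) (V' x) x (hV x hx).1 (hV x hx).1
    have h3 := h1.sub (h2.div_const 2)
    refine h3.congr_deriv ?_
    rw [heq1 x hx, hswap (V' x) (V x), hGdef]
    ring
  have hGnonneg : ∀ x ∈ Set.Ioo (0:ℝ) 1, 0 ≤ G x := by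
    intro x _
    exact add_nonneg (ht1nonneg (V' x)) (mul_nonneg hlam (hq0 (V x)))
  have hH0 : H 0 = 0 := by
    simp [hHdef, hbc0]
  have hH1 : H 1 ≤ 0 := by
    have hterm1 : (star (V 1) ⬝ᵥ SBc.mulVec (V' 1)).re = 0 := by
      rw [hSBcblk, dot_lowerright]
      have hz : star (V 1 ∘ Sum.inr) = 0 := by
        funext i
        simp [Function.comp, hbc1 i]
      rw [hz, zero_dotProduct]
      simp
    have hterm2 : 0 ≤ (star (V 1) ⬝ᵥ SAc.mulVec (V 1)).re := by
      rw [hSAcblk, dot_both0 _ _ _ _ _ _ (fun j => hbc1 j) (fun j => hbc1 j)]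
      exact quad_re_nonneg _ hSA11.posSemidef _
    have : H 1 = (star (V 1) ⬝ᵥ SBc.mulVec (V' 1)).re
        - (star (V 1) ⬝ᵥ SAc.mulVec (V 1)).re / 2 := by rw [hHdef]
    rw [this, hterm1]
    linarith
  have hmono := mono_aux hHd hGnonneg
  have hHzero : ∀ x ∈ Set.Icc (0:ℝ) 1, H x = 0 := by
    intro x hx
    have h1 := hmono hmem0 hx hx.1
    have h2 := hmono hx hmem1 hx.2
    rw [hH0] at h1
    linarith
  have hGzero : ∀ x ∈ Set.Ioo (0:ℝ) 1, G x = 0 := by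
    intro x hx
    have hev : H =ᶠ[nhds x] fun _ => (0:ℝ) := by
      filter_upwards [isOpen_Ioo.mem_nhds hx] with y hy
      exact hHzero y (Set.Ioo_subset_Icc_self hy)
    have h1 : HasDerivAt (fun _ : ℝ => (0:ℝ)) (G x) x :=
      (hHd x (Set.Ioo_subset_Icc_self hx)).congr_of_eventuallyEq hev.symm
    exact h1.unique (hasDerivAt_const x 0)
  have hV'inr : ∀ x ∈ Set.Ioo (0:ℝ) 1, ∀ i, V' x (Sum.inr i) = 0 := by
    intro x hx i
    have h0 := hGzero x hx
    rw [hGdef] at h0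
    have h0' : (star (V' x) ⬝ᵥ SBc.mulVec (V' x)).re
        + lam.re * (star (V x) ⬝ᵥ Sc.mulVec (V x)).re = 0 := h0
    have hA := ht1nonneg (V' x)
    have hBq := mul_nonneg hlam (hq0 (V x))
    have ht0 : (star (V' x) ⬝ᵥ SBc.mulVec (V' x)).re = 0 := by linarith
    exact ht1zero (V' x) ht0 i
  have hVinr : ∀ x ∈ Set.Icc (0:ℝ) 1, ∀ i, V x (Sum.inr i) = 0 := by
    intro x hx i
    have hre : ∀ y ∈ Set.Icc (0:ℝ) 1,
        HasDerivAt (fun t => (V t (Sum.inr i)).re) ((fun y => (V' y (Sum.inr i)).re) y) y :=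
      fun y hy => re_hasDerivAt (hasDerivAt_pi.1 (hV y hy).1 (Sum.inr i))
    have him : ∀ y ∈ Set.Icc (0:ℝ) 1,
        HasDerivAt (fun t => (V t (Sum.inr i)).im) ((fun y => (V' y (Sum.inr i)).im) y) y :=
      fun y hy => im_hasDerivAt (hasDerivAt_pi.1 (hV y hy).1 (Sum.inr i))
    have h1 := const_aux hre (fun y hy => by rw [hV'inr y hy i]; simp) x hx
    have h2 := const_aux him (fun y hy => by rw [hV'inr y hy i]; simp) x hx
    have hb := hbc1 i
    apply Complex.ext
    · simpa [hb] using h1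
    · simpa [hb] using h2
  -- second stage
  have hBinl : ∀ z : Fin r ⊕ Fin s → ℂ, ∀ i,
      ((Bmat.map (algebraMap ℝ ℂ)).mulVec z) (Sum.inl i) = 0 := by
    intro z i
    rw [hBmatdef, Matrix.fromBlocks_map, Matrix.fromBlocks_mulVec]
    simp
  have hAinl : ∀ x ∈ Set.Ioo (0:ℝ) 1, ∀ i,
      ((Amat.map (algebraMap ℝ ℂ)).mulVec (V' x)) (Sum.inl i)
        = -lam * V x (Sum.inl i) := by
    intro x hx i
    have h := congrFun (heq x (Set.Ioo_subset_Icc_self hx)) (Sum.inl i)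
    simp only [Pi.add_apply, Pi.smul_apply, smul_eq_mul] at h
    rw [hBinl (V'' x) i] at h
    linear_combination h
  have hkey : ∀ x ∈ Set.Ioo (0:ℝ) 1,
      star (V x) ⬝ᵥ SAc.mulVec (V' x)
        = -(lam * (star (V x) ⬝ᵥ Sc.mulVec (V x))) := by
    intro x hx
    have hxI := Set.Ioo_subset_Icc_self hx
    have hrw : SAc.mulVec (V' x)
        = Sc.mulVec ((Amat.map (algebraMap ℝ ℂ)).mulVec (V' x)) := by
      rw [hSAcdef, hScdef, Matrix.map_mul, ← Matrix.mulVec_mulVec]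
    rw [hrw, hScblk]
    rw [dot_left0 _ _ _ ((Amat.map (algebraMap ℝ ℂ)).mulVec (V' x)) (V x)
        (fun j => hVinr x hxI j)]
    rw [dot_left0 _ _ _ (V x) (V x) (fun j => hVinr x hxI j)]
    have huinl : ((Amat.map (algebraMap ℝ ℂ)).mulVec (V' x)) ∘ Sum.inl
        = (-lam) • (V x ∘ Sum.inl) := by
      funext i
      have := hAinl x hx i
      simpa [Pi.smul_apply, smul_eq_mul] using this
    rw [huinl, Matrix.mulVec_smul, dotProduct_smul]
    simp only [smul_eq_mul]
    ring
  set K : ℝ → ℝ := fun x => (star (V x) ⬝ᵥ SAc.mulVec (V x)).re with hKdef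
  have hKd : ∀ x ∈ Set.Icc (0:ℝ) 1, HasDerivAt K ((fun x =>
      (star (V' x) ⬝ᵥ SAc.mulVec (V x)).re + (star (V x) ⬝ᵥ SAc.mulVec (V' x)).re) x) x :=
    fun x hx => hasDerivAt_quadform SAc V V (V' x) (V' x) x (hV x hx).1 (hV x hx).1
  have hknonpos : ∀ x ∈ Set.Ioo (0:ℝ) 1,
      (star (V' x) ⬝ᵥ SAc.mulVec (V x)).re + (star (V x) ⬝ᵥ SAc.mulVec (V' x)).re ≤ 0 := by
    intro x hx
    rw [hswap (V' x) (V x), hkey x hx]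
    have hre : (-(lam * (star (V x) ⬝ᵥ Sc.mulVec (V x)))).re
        = -(lam.re * (star (V x) ⬝ᵥ Sc.mulVec (V x)).re) := by
      rw [Complex.neg_re, Complex.mul_re, hqim, mul_zero, sub_zero]
    rw [hre]
    have := mul_nonneg hlam (hq0 (V x))
    linarith
  have hanti := anti_aux hKd hknonpos
  have hK0 : K 0 = 0 := by
    simp [hKdef, hbc0]
  intro x hx
  have hKx : K x ≤ 0 := by
    have := hanti hmem0 hx hx.1
    rw [hK0] at this
    exact this
  have hKx' : K x = (star (V x ∘ Sum.inl) ⬝ᵥ ((S11 * A11).map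
      (algebraMap ℝ ℂ)).mulVec (V x ∘ Sum.inl)).re := by
    simp only [hKdef]
    rw [hSAcblk, dot_both0 _ _ _ _ _ _ (fun j => hVinr x hx j) (fun j => hVinr x hx j)]
  have hge : 0 ≤ K x := by
    rw [hKx']
    exact quad_re_nonneg _ hSA11.posSemidef _
  have hinl := quad_re_eq_zero _ hSA11 (V x ∘ Sum.inl)
    (by rw [← hKx']; exact le_antisymm hKx hge)
  funext j
  cases j with
  | inl i => exact congrFun hinl i
  | inr i => exact hVinr x hx i
end
end
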